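/- arXiv:math/0411211 — 10 statements merged into one kernel-verified Lean document; each statement's English description precedes it below -/
import Mathlib

section
/- Let n ≥ 1 and let L : ℝ × ℝⁿ × ℝⁿ → ℝ, written L(t,x,v), be continuously differentiable. Let h_t : ℝ × ℝ × ℝⁿ → ℝ and h_x : ℝ × ℝ × ℝⁿ → ℝⁿ be C² maps forming a local one-parameter group of transformations: h_t(0,t,x) = t, h_x(0,t,x) = x, and for all s, ∂h_t/∂s(s,t,x) = T(h_t(s,t,x), h_x(s,t,x)) and ∂h_x/∂s(s,t,x) = X(h_t(s,t,x), h_x(s,t,x)), where T(t,x) = ∂h_t/∂s(0,t,x) and X(t,x) = ∂h_x/∂s(0,t,x) are the (C¹) infinitesimal generators. Then the following are equivalent. (i) Invariance: for every C¹ curve x : [a,b] → ℝⁿ, every subinterval [α,β] ⊆ [a,b], and every s in a neighborhood of 0 small enough that θ_s(t) := h_t(s,t,x(t)) has strictly positive derivative on [α,β], the transformed curve x^s := (t ↦ h_x(s,t,x(t))) ∘ θ_s⁻¹ satisfies ∫_{θ_s(α)}^{θ_s(β)} L(τ, x^s(τ), (x^s)'(τ)) dτ = ∫_α^β L(t, x(t),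 x'(t)) dt. (ii) For all (t,x,v) ∈ ℝ × ℝⁿ × ℝⁿ: ∂L/∂t(t,x,v)·T(t,x) + ∇_x L(t,x,v)·X(t,x) + ∇_v L(t,x,v)·(∂X/∂t(t,x) + D_x X(t,x)·v − v·(∂T/∂t(t,x) + ∇_x T(t,x)·v)) + L(t,x,v)·(∂T/∂t(t,x) + ∇_x T(t,x)·v) = 0, where D_x X denotes the Jacobian matrix of X with respect to x. -/
/-!
Pull the transformed functional back to the original time by `τ = Ht (s, t, x t)`: it becomes
`∫ t in α..β, Λ s t` with `Λ s t = L (Ht, Hx, ∂ₜHx / ∂ₜHt) * ∂ₜHt`, everything evaluated at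
`(s, t, x t)`. By the flow equations and the symmetry of second derivatives, `∂ₛ Λ s t` is the
left-hand side of (ii) at the transformed point, times `∂ₜHt`. So if (ii) holds, `Λ s t` does not
depend on `s` and the functional is invariant. Conversely, invariance makes `∫ t in α..β, Λ s t`
constant in `s`, so its derivative at `s = 0`, the integral of the left-hand side of (ii) along
`(t, x t, x' t)`, vanishes on every interval; straight lines `x t = y + (t - t₀) • v` then give (ii)
at an arbitrary point `(t₀, y, v)`.
-/

open Set Filter Metric MeasureTheory intervalIntegral
open scoped Topology Interval

theorem hasDerivAt_intervalIntegral_of_continuousOn {E : Type*} [NormedAddCommGroup E]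
    [NormedSpace ℝ E] {F F' : ℝ → ℝ → E} {s₀ a b : ℝ} {U : Set ℝ} (hU : U ∈ 𝓝 s₀)
    (hF : ∀ s ∈ U, ContinuousOn (F s) [[a, b]])
    (hF' : ContinuousOn (Function.uncurry F') (U ×ˢ [[a, b]]))
    (hdiff : ∀ s ∈ U, ∀ t ∈ [[a, b]], HasDerivAt (F · t) (F' s t) s) :
    HasDerivAt (fun s => ∫ t in a..b, F s t) (∫ t in a..b, F' s₀ t) s₀ := by
  obtain ⟨r, hr, hrU⟩ := nhds_basis_closedBall.mem_iff.1 hU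
  obtain ⟨C, hC⟩ := (isCompact_closedBall s₀ r).prod isCompact_uIcc
    |>.exists_bound_of_continuousOn (hF'.mono (prod_mono hrU subset_rfl))
  have hs₀ : s₀ ∈ U := mem_of_mem_nhds hU
  refine (hasDerivAt_integral_of_dominated_loc_of_deriv_le (bound := fun _ => C)
    (closedBall_mem_nhds s₀ hr) ?_ ((hF s₀ hs₀).intervalIntegrable)
    ?_ (ae_of_all _ fun t ht s hs => hC (s, t) ⟨hs, uIoc_subset_uIcc ht⟩)
    intervalIntegrable_const
    (ae_of_all _ fun t ht s hs => hdiff s (hrU hs) t (uIoc_subset_uIcc ht))).2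
  · filter_upwards [hU] with s hs
    exact ((hF s hs).mono uIoc_subset_uIcc).aestronglyMeasurable measurableSet_uIoc
  · have : ContinuousOn (F' s₀) [[a, b]] :=
      hF'.comp (continuousOn_const.prodMk continuousOn_id) fun t ht => ⟨hs₀, ht⟩
    exact (this.mono uIoc_subset_uIcc).aestronglyMeasurable measurableSet_uIoc

theorem Continuous.eq_zero_of_forall_intervalIntegral_eq_zero {E : Type*} [NormedAddCommGroup E]
    [NormedSpace ℝ E] [CompleteSpace E] {f : ℝ → E} (hf : Continuous f)
    (h : ∀ a b, a ≤ b → ∫ t in a..b, f t = 0) : f = 0 := by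
  funext t
  have hzero : (fun r => ∫ u in t..r, f u) = fun _ => 0 := by
    funext r
    rcases le_total t r with htr | hrt
    · exact h t r htr
    · rw [integral_symm, h r t hrt, neg_zero]
  have hderiv : HasDerivAt (fun r => ∫ u in t..r, f u) (f t) t :=
    integral_hasDerivAt_right (hf.intervalIntegrable t t)
      (hf.stronglyMeasurableAtFilter volume (𝓝 t)) hf.continuousAt
  rw [hzero] at hderiv
  exact hderiv.unique (hasDerivAt_const t 0)

theorem HasStrictDerivAt.hasDerivAt_of_eventually_comp_eq {E : Type*} [NormedAddCommGroup E]
    [NormedSpace ℝ E] {θ : ℝ → ℝ} {ψ f : ℝ → E} {u p : ℝ} {q : E}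
    (hθ : HasStrictDerivAt θ p u) (hp : p ≠ 0) (hψ : HasDerivAt ψ q u)
    (hf : ∀ᶠ v in 𝓝 u, f (θ v) = ψ v) : HasDerivAt f (p⁻¹ • q) (θ u) := by
  set g := hθ.localInverse θ p u hp
  have hgθ : g (θ u) = u := (hθ.hasStrictFDerivAt_equiv hp).localInverse_apply_image
  have hg : HasDerivAt g p⁻¹ (θ u) := (hθ.to_localInverse hp).hasDerivAt
  have hψg : HasDerivAt (ψ ∘ g) (p⁻¹ • q) (θ u) := by
    rw [← hgθ] at hψ
    exact hψ.scomp (θ u) hg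
  refine hψg.congr_of_eventuallyEq ?_
  filter_upwards [hg.continuousAt.tendsto.eventually (hgθ ▸ hf),
    hθ.eventually_right_inverse hp] with y hfy hθy
  change f y = ψ (g y)
  rw [← hfy, hθy]

namespace VariationalInvariance

variable {E F : Type*} [NormedAddCommGroup E] [NormedSpace ℝ E]
  [NormedAddCommGroup F] [NormedSpace ℝ F]

noncomputable def invarianceDefect (L : ℝ × E × E → ℝ) (T : ℝ × E → ℝ) (X : ℝ × E → E) :
    ℝ × E × E → ℝ
  | (t, y, v) =>
    fderiv ℝ L (t, y, v) (1, 0, 0) * T (t, y)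
      + fderiv ℝ L (t, y, v) (0, X (t, y), 0)
      + fderiv ℝ L (t, y, v) (0, 0, fderiv ℝ X (t, y) (1, v) - fderiv ℝ T (t, y) (1, v) • v)
      + L (t, y, v) * fderiv ℝ T (t, y) (1, v)

theorem continuous_invarianceDefect {L : ℝ × E × E → ℝ} {T : ℝ × E → ℝ} {X : ℝ × E → E}
    (hL : ContDiff ℝ 1 L) (hT : ContDiff ℝ 1 T) (hX : ContDiff ℝ 1 X) :
    Continuous (invarianceDefect L T X) := by
  have hdL := hL.continuous_fderiv one_ne_zero
  have hdT := hT.continuous_fderiv one_ne_zero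
  have hdX := hX.continuous_fderiv one_ne_zero
  have hL := hL.continuous
  have hT := hT.continuous
  have hX := hX.continuous
  change Continuous fun z : ℝ × E × E => fderiv ℝ L z (1, 0, 0) * T (z.1, z.2.1)
      + fderiv ℝ L z (0, X (z.1, z.2.1), 0)
      + fderiv ℝ L z (0, 0, fderiv ℝ X (z.1, z.2.1) (1, z.2.2)
          - fderiv ℝ T (z.1, z.2.1) (1, z.2.2) • z.2.2)
      + L z * fderiv ℝ T (z.1, z.2.1) (1, z.2.2)
  fun_prop

theorem hasDerivAt_lagrangian_mul_of_flow {L : ℝ × E × E → ℝ} {T : ℝ × E → ℝ} {X : ℝ × E → E}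
    {θ p : ℝ → ℝ} {ψ q : ℝ → E} {s : ℝ} (hp0 : p s ≠ 0)
    (hL : DifferentiableAt ℝ L (θ s, ψ s, (p s)⁻¹ • q s))
    (hθ : HasDerivAt θ (T (θ s, ψ s)) s) (hψ : HasDerivAt ψ (X (θ s, ψ s)) s)
    (hp : HasDerivAt p (fderiv ℝ T (θ s, ψ s) (p s, q s)) s)
    (hq : HasDerivAt q (fderiv ℝ X (θ s, ψ s) (p s, q s)) s) :
    HasDerivAt (fun σ => L (θ σ, ψ σ, (p σ)⁻¹ • q σ) * p σ)
      (invarianceDefect L T X (θ s, ψ s, (p s)⁻¹ • q s) * p s) s := by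
  set w := (p s)⁻¹ • q s
  have hqw : q s = p s • w := by simp [w, smul_smul, mul_inv_cancel₀ hp0]
  -- `(p, q) = p • (1, w)`, so the linearised generators scale by `p`
  have hpq : (p s, q s) = p s • ((1 : ℝ), w) := by simp [hqw]
  rw [hpq, map_smul, smul_eq_mul] at hp
  rw [hpq, map_smul] at hq
  set c := fderiv ℝ T (θ s, ψ s) (1, w)
  set Xw := fderiv ℝ X (θ s, ψ s) (1, w)
  have hw : HasDerivAt (fun σ => (p σ)⁻¹ • q σ) (Xw - c • w) s := by
    refine ((hp.inv hp0).smul hq).congr_deriv ?_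
    rw [hqw, smul_smul, smul_smul, Pi.inv_apply]
    match_scalars <;> field_simp
  have hLw : HasDerivAt (fun σ => L (θ σ, ψ σ, (p σ)⁻¹ • q σ))
      (fderiv ℝ L (θ s, ψ s, w) (T (θ s, ψ s), X (θ s, ψ s), Xw - c • w)) s :=
    hL.hasFDerivAt.comp_hasDerivAt s (hθ.prodMk (hψ.prodMk hw))
  refine (hLw.mul hp).congr_deriv ?_
  have hsplit : ((T (θ s, ψ s), X (θ s, ψ s), Xw - c • w) : ℝ × E × E)
      = T (θ s, ψ s) • ((1 : ℝ), (0 : E), (0 : E)) + ((0 : ℝ), X (θ s, ψ s), (0 : E))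
        + ((0 : ℝ), (0 : E), Xw - c • w) := by
    simp
  rw [hsplit, map_add, map_add, map_smul, smul_eq_mul]
  simp only [invarianceDefect]
  ring

variable {L : ℝ × E × E → ℝ} {H : ℝ × ℝ × E → F} {Ht : ℝ × ℝ × E → ℝ} {Hx : ℝ × ℝ × E → E}
  {x : ℝ → E}

/-- `∂ₜ H (s, t, x t)` by the chain rule rather than through `deriv`, so that it is visibly
jointly continuous in `(s, t)`. -/
noncomputable def curveDeriv (H : ℝ × ℝ × E → F) (x : ℝ → E) (s t : ℝ) : F :=
  fderiv ℝ H (s, t, x t) (0, 1, deriv x t)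

noncomputable def transformedVelocity (Ht : ℝ × ℝ × E → ℝ) (Hx : ℝ × ℝ × E → E) (x : ℝ → E)
    (s t : ℝ) : E :=
  (curveDeriv Ht x s t)⁻¹ • curveDeriv Hx x s t

/-- The integrand of the transformed functional in the original time `t`, where
`τ = Ht (s, t, x t)` and `dτ = curveDeriv Ht x s t dt`. -/
noncomputable def pulledBackLagrangian (L : ℝ × E × E → ℝ) (Ht : ℝ × ℝ × E → ℝ)
    (Hx : ℝ × ℝ × E → E) (x : ℝ → E) (s t : ℝ) : ℝ :=
  L (Ht (s, t, x t), Hx (s, t, x t), transformedVelocity Ht Hx x s t) * curveDeriv Ht x s t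

theorem hasDerivAt_curve (hH : Differentiable ℝ H) (hx : Differentiable ℝ x) (s t : ℝ) :
    HasDerivAt (fun u => H (s, u, x u)) (curveDeriv H x s t) t :=
  (hH _).hasFDerivAt.comp_hasDerivAt t
    ((hasDerivAt_const t s).prodMk ((hasDerivAt_id t).prodMk (hx t).hasDerivAt))

theorem curveDeriv_eq_deriv (hH : Differentiable ℝ H) (hx : Differentiable ℝ x) (s t : ℝ) :
    curveDeriv H x s t = deriv (fun u => H (s, u, x u)) t :=
  (hasDerivAt_curve hH hx s t).deriv.symm

theorem hasDerivAt_param (hH : Differentiable ℝ H) (s t : ℝ) (y : E) :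
    HasDerivAt (fun σ => H (σ, t, y)) (fderiv ℝ H (s, t, y) (1, 0, 0)) s :=
  (hH _).hasFDerivAt.comp_hasDerivAt s
    ((hasDerivAt_id s).prodMk ((hasDerivAt_const s t).prodMk (hasDerivAt_const s y)))

theorem continuous_curveDeriv (hH : ContDiff ℝ 1 H) (hx : ContDiff ℝ 1 x) :
    Continuous fun st : ℝ × ℝ => curveDeriv H x st.1 st.2 := by
  have hdH := hH.continuous_fderiv one_ne_zero
  have hdx := hx.continuous_deriv le_rfl
  have hx := hx.continuous
  unfold curveDeriv
  fun_prop

theorem continuousAt_pulledBackLagrangian (hL : Continuous L) (hHt : ContDiff ℝ 1 Ht)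
    (hHx : ContDiff ℝ 1 Hx) (hx : ContDiff ℝ 1 x) {s t : ℝ} (hp : curveDeriv Ht x s t ≠ 0) :
    ContinuousAt (fun st : ℝ × ℝ => pulledBackLagrangian L Ht Hx x st.1 st.2) (s, t) := by
  have hpc := (continuous_curveDeriv hHt hx).continuousAt (x := (s, t))
  have hqc := (continuous_curveDeriv hHx hx).continuousAt (x := (s, t))
  have hw : ContinuousAt (fun st : ℝ × ℝ => transformedVelocity Ht Hx x st.1 st.2) (s, t) :=
    (hpc.inv₀ hp).smul hqc
  have hcurve : Continuous fun st : ℝ × ℝ => (st.1, st.2, x st.2) := by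
    have := hx.continuous
    fun_prop
  exact (hL.continuousAt.comp ((hHt.continuous.comp hcurve).continuousAt.prodMk
    ((hHx.continuous.comp hcurve).continuousAt.prodMk hw))).mul hpc

/-- Symmetry of the second derivative of `H`. -/
theorem hasDerivAt_curveDeriv_param (hH : ContDiff ℝ 2 H) (hx : Differentiable ℝ x) {s t : ℝ}
    {d : F} (hd : HasDerivAt (fun u => fderiv ℝ H (s, u, x u) (1, 0, 0)) d t) :
    HasDerivAt (fun σ => curveDeriv H x σ t) d s := by
  have hH' : Differentiable ℝ (fderiv ℝ H) :=
    (hH.fderiv_right (m := 1) le_rfl).differentiable_one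
  have h₁ := (hasDerivAt_curve hH' hx s t).clm_apply
    (hasDerivAt_const t ((1 : ℝ), (0 : ℝ), (0 : E)))
  have h₂ := (hasDerivAt_param hH' s t (x t)).clm_apply
    (hasDerivAt_const s ((0 : ℝ), (1 : ℝ), deriv x t))
  simp only [map_zero, add_zero] at h₁ h₂
  rw [hd.unique h₁, curveDeriv, (hH.contDiffAt.isSymmSndFDerivAt (by simp))]
  exact h₂

theorem hasDerivAt_param_of_flow {V : ℝ × E → F} (hH : Differentiable ℝ H)
    (hflow : ∀ s t y, deriv (fun σ => H (σ, t, y)) s = V (Ht (s, t, y), Hx (s, t, y)))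
    (s t : ℝ) (y : E) :
    HasDerivAt (fun σ => H (σ, t, y)) (V (Ht (s, t, y), Hx (s, t, y))) s := by
  rw [← hflow]
  exact (hasDerivAt_param hH s t y).differentiableAt.hasDerivAt

/-- The variational equation of the flow along the curve. -/
theorem hasDerivAt_curveDeriv_param_of_flow {V : ℝ × E → F} (hH : ContDiff ℝ 2 H)
    (hHt : Differentiable ℝ Ht) (hHx : Differentiable ℝ Hx) (hV : Differentiable ℝ V)
    (hx : Differentiable ℝ x)
    (hflow : ∀ s t y, deriv (fun σ => H (σ, t, y)) s = V (Ht (s, t, y), Hx (s, t, y)))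
    (s t : ℝ) :
    HasDerivAt (fun σ => curveDeriv H x σ t)
      (fderiv ℝ V (Ht (s, t, x t), Hx (s, t, x t)) (curveDeriv Ht x s t, curveDeriv Hx x s t))
      s := by
  refine hasDerivAt_curveDeriv_param hH hx ?_
  have hflow' : (fun u => fderiv ℝ H (s, u, x u) (1, 0, 0))
      = fun u => V (Ht (s, u, x u), Hx (s, u, x u)) := by
    funext u
    exact (hasDerivAt_param_of_flow (hH.differentiable two_ne_zero) hflow s u (x u)).unique
      (hasDerivAt_param (hH.differentiable two_ne_zero) s u (x u))
      |>.symm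
  rw [hflow']
  exact (hV _).hasFDerivAt.comp_hasDerivAt t
    ((hasDerivAt_curve hHt hx s t).prodMk (hasDerivAt_curve hHx hx s t))

theorem hasDerivAt_pulledBackLagrangian {T : ℝ × E → ℝ} {X : ℝ × E → E}
    (hL : Differentiable ℝ L) (hHt : ContDiff ℝ 2 Ht) (hHx : ContDiff ℝ 2 Hx)
    (hT : Differentiable ℝ T) (hX : Differentiable ℝ X) (hx : Differentiable ℝ x)
    (hHts : ∀ s t y, deriv (fun σ => Ht (σ, t, y)) s = T (Ht (s, t, y), Hx (s, t, y)))
    (hHxs : ∀ s t y, deriv (fun σ => Hx (σ, t, y)) s = X (Ht (s, t, y), Hx (s, t, y)))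
    {s t : ℝ} (hp : curveDeriv Ht x s t ≠ 0) :
    HasDerivAt (fun σ => pulledBackLagrangian L Ht Hx x σ t)
      (pulledBackLagrangian (invarianceDefect L T X) Ht Hx x s t) s :=
  have hHt' := hHt.differentiable two_ne_zero
  have hHx' := hHx.differentiable two_ne_zero
  hasDerivAt_lagrangian_mul_of_flow hp (hL _)
    (hasDerivAt_param_of_flow hHt' hHts s t (x t)) (hasDerivAt_param_of_flow hHx' hHxs s t (x t))
    (hasDerivAt_curveDeriv_param_of_flow hHt hHt' hHx' hT hx hHts s t)
    (hasDerivAt_curveDeriv_param_of_flow hHx hHt' hHx' hX hx hHxs s t)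

section InitialValue

variable (hHt : Differentiable ℝ Ht) (hx : Differentiable ℝ x)
  (hHt0 : ∀ t y, Ht (0, t, y) = t)
include hHt hx hHt0

theorem curveDeriv_zero_eq_one (t : ℝ) : curveDeriv Ht x 0 t = 1 := by
  simp [curveDeriv_eq_deriv hHt hx, hHt0]

theorem pulledBackLagrangian_zero (hHx : Differentiable ℝ Hx) (hHx0 : ∀ t y, Hx (0, t, y) = y)
    (t : ℝ) : pulledBackLagrangian L Ht Hx x 0 t = L (t, x t, deriv x t) := by
  simp [pulledBackLagrangian, transformedVelocity, curveDeriv_zero_eq_one hHt hx hHt0,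
    curveDeriv_eq_deriv hHx hx, hHt0, hHx0]

end InitialValue

theorem eventually_forall_curveDeriv_pos (hHt : ContDiff ℝ 1 Ht) (hx : ContDiff ℝ 1 x)
    (hHt0 : ∀ t y, Ht (0, t, y) = t) {K : Set ℝ} (hK : IsCompact K) :
    ∀ᶠ s in 𝓝 0, ∀ t ∈ K, 0 < curveDeriv Ht x s t := by
  refine hK.eventually_forall_of_forall_eventually fun t _ =>
    (continuous_curveDeriv hHt hx).continuousAt.eventually (lt_mem_nhds ?_)
  show 0 < curveDeriv Ht x 0 t
  rw [curveDeriv_zero_eq_one hHt.differentiable_one hx.differentiable_one hHt0]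
  exact one_pos

theorem contDiff_curve (hH : ContDiff ℝ 1 H) (hx : ContDiff ℝ 1 x) (s : ℝ) :
    ContDiff ℝ 1 fun u => H (s, u, x u) :=
  hH.comp (contDiff_const.prodMk (contDiff_id.prodMk hx))

theorem strictMonoOn_curve (hHt : ContDiff ℝ 1 Ht) (hx : ContDiff ℝ 1 x) {s α β : ℝ}
    (hpos : ∀ t ∈ Ioo α β, 0 < curveDeriv Ht x s t) :
    StrictMonoOn (fun t => Ht (s, t, x t)) (Icc α β) := by
  rw [← interior_Icc] at hpos
  exact strictMonoOn_of_hasDerivWithinAt_pos (convex_Icc α β)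
    (contDiff_curve hHt hx s).continuous.continuousOn
    (fun t _ => (hasDerivAt_curve hHt.differentiable_one
      hx.differentiable_one s t).hasDerivWithinAt) hpos

theorem hasDerivAt_of_comp_curve_eq (hHt : ContDiff ℝ 1 Ht) (hHx : ContDiff ℝ 1 Hx)
    (hx : ContDiff ℝ 1 x) {xs : ℝ → E} {s t : ℝ} (hp : curveDeriv Ht x s t ≠ 0)
    (hxs : ∀ᶠ u in 𝓝 t, xs (Ht (s, u, x u)) = Hx (s, u, x u)) :
    HasDerivAt xs (transformedVelocity Ht Hx x s t) (Ht (s, t, x t)) :=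
  have hx' := hx.differentiable_one
  have hθ := hasDerivAt_curve hHt.differentiable_one hx' s t
  HasStrictDerivAt.hasDerivAt_of_eventually_comp_eq
    ((contDiff_curve hHt hx s).contDiffAt.hasStrictDerivAt' hθ one_ne_zero) hp
    (hasDerivAt_curve hHx.differentiable_one hx' s t) hxs

theorem integral_transformed_eq_integral_pulledBackLagrangian (hHt : ContDiff ℝ 1 Ht)
    (hHx : ContDiff ℝ 1 Hx) (hx : ContDiff ℝ 1 x) {s α β : ℝ} (hαβ : α ≤ β)
    (hpos : ∀ t ∈ Ioo α β, 0 < curveDeriv Ht x s t) {xs : ℝ → E}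
    (hxs : ∀ t ∈ Ioo α β, xs (Ht (s, t, x t)) = Hx (s, t, x t)) :
    ∫ τ in Ht (s, α, x α)..Ht (s, β, x β), L (τ, xs τ, deriv xs τ)
      = ∫ t in α..β, pulledBackLagrangian L Ht Hx x s t := by
  set θ := fun t => Ht (s, t, x t)
  have hmono := strictMonoOn_curve hHt hx hpos
  have himage : θ '' Ioo α β = Ioo (θ α) (θ β) :=
    (contDiff_curve hHt hx s).continuous.continuousOn.image_Ioo_of_strictMonoOn hαβ hmono
  have hθ t : HasDerivWithinAt θ (curveDeriv Ht x s t) (Ioo α β) t :=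
    (hasDerivAt_curve hHt.differentiable_one hx.differentiable_one
      s t).hasDerivWithinAt
  have hpull : ∀ t ∈ Ioo α β, |curveDeriv Ht x s t| • L (θ t, xs (θ t), deriv xs (θ t))
      = pulledBackLagrangian L Ht Hx x s t := fun t ht => by
    have hxs' : ∀ᶠ u in 𝓝 t, xs (θ u) = Hx (s, u, x u) :=
      eventually_of_mem (isOpen_Ioo.mem_nhds ht) hxs
    rw [(hasDerivAt_of_comp_curve_eq hHt hHx hx (hpos t ht).ne' hxs').deriv, hxs t ht,
      abs_of_pos (hpos t ht), smul_eq_mul, mul_comm]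
    rfl
  calc ∫ τ in θ α..θ β, L (τ, xs τ, deriv xs τ)
      = ∫ τ in θ '' Ioo α β, L (τ, xs τ, deriv xs τ) := by
        rw [integral_of_le (hmono.monotoneOn (left_mem_Icc.2 hαβ) (right_mem_Icc.2 hαβ) hαβ),
          integral_Ioc_eq_integral_Ioo, himage]
    _ = ∫ t in Ioo α β, |curveDeriv Ht x s t| • L (θ t, xs (θ t), deriv xs (θ t)) :=
        integral_image_eq_integral_abs_deriv_smul measurableSet_Ioo (fun t _ => hθ t)
          (hmono.injOn.mono Ioo_subset_Icc_self) _
    _ = ∫ t in α..β, pulledBackLagrangian L Ht Hx x s t := by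
        rw [setIntegral_congr_fun measurableSet_Ioo hpull, integral_of_le hαβ,
          integral_Ioc_eq_integral_Ioo]

/-- Condition (i) for the curve `x` on `[α, β]`. -/
def IsInvariantAlong (L : ℝ × E × E → ℝ) (Ht : ℝ × ℝ × E → ℝ) (Hx : ℝ × ℝ × E → E)
    (x : ℝ → E) (α β : ℝ) : Prop :=
  ∃ ε > (0 : ℝ), ∀ s : ℝ, |s| < ε →
    (∀ t ∈ Icc α β, 0 < deriv (fun u => Ht (s, u, x u)) t) →
    ∀ xs : ℝ → E, (∀ t ∈ Icc α β, xs (Ht (s, t, x t)) = Hx (s, t, x t)) →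
      ∫ τ in Ht (s, α, x α)..Ht (s, β, x β), L (τ, xs τ, deriv xs τ)
        = ∫ t in α..β, L (t, x t, deriv x t)

theorem eventually_integral_pulledBackLagrangian_eq (hHt : ContDiff ℝ 1 Ht)
    (hHx : ContDiff ℝ 1 Hx) (hx : ContDiff ℝ 1 x) (hHt0 : ∀ t y, Ht (0, t, y) = t)
    {α β : ℝ} (hαβ : α ≤ β)
    (hinv : IsInvariantAlong L Ht Hx x α β) :
    ∀ᶠ s in 𝓝 0, ∫ t in α..β, pulledBackLagrangian L Ht Hx x s t
      = ∫ t in α..β, L (t, x t, deriv x t) := by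
  obtain ⟨ε, hε, hinv⟩ := hinv
  filter_upwards [eventually_forall_curveDeriv_pos hHt hx hHt0 (isCompact_Icc (a := α) (b := β)),
    ball_mem_nhds 0 hε] with s hpos hs
  rw [mem_ball, Real.dist_0_eq_abs] at hs
  have hmono := strictMonoOn_curve hHt hx fun u hu => hpos u (Ioo_subset_Icc_self hu)
  set g := Function.invFunOn (fun t => Ht (s, t, x t)) (Icc α β)
  set xs : ℝ → E := fun τ => Hx (s, g τ, x (g τ))
  have hxs : ∀ t ∈ Icc α β, xs (Ht (s, t, x t)) = Hx (s, t, x t) := fun t ht => by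
    simp only [xs, show g (Ht (s, t, x t)) = t from hmono.injOn.leftInvOn_invFunOn ht]
  have hposd : ∀ t ∈ Icc α β, 0 < deriv (fun u => Ht (s, u, x u)) t := fun t ht => by
    rw [← curveDeriv_eq_deriv hHt.differentiable_one hx.differentiable_one]
    exact hpos t ht
  rw [← integral_transformed_eq_integral_pulledBackLagrangian hHt hHx hx hαβ
    (fun t ht => hpos t (Ioo_subset_Icc_self ht)) (fun t ht => hxs t (Ioo_subset_Icc_self ht))]
  exact hinv s hs hposd xs hxs

section Flow

variable {T : ℝ × E → ℝ} {X : ℝ × E → E}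
  (hL : ContDiff ℝ 1 L) (hHt : ContDiff ℝ 2 Ht) (hHx : ContDiff ℝ 2 Hx)
  (hT : ContDiff ℝ 1 T) (hX : ContDiff ℝ 1 X)
  (hHt0 : ∀ t y, Ht (0, t, y) = t) (hHx0 : ∀ t y, Hx (0, t, y) = y)
  (hHts : ∀ s t y, deriv (fun σ => Ht (σ, t, y)) s = T (Ht (s, t, y), Hx (s, t, y)))
  (hHxs : ∀ s t y, deriv (fun σ => Hx (σ, t, y)) s = X (Ht (s, t, y), Hx (s, t, y)))
  (hx : ContDiff ℝ 1 x)
include hL hHt hHx hT hX hHt0 hHx0 hHts hHxs hx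

theorem isInvariantAlong_of_invarianceDefect_eq_zero (hZ : invarianceDefect L T X = 0)
    {α β : ℝ} (hαβ : α ≤ β) : IsInvariantAlong L Ht Hx x α β := by
  obtain ⟨ε, hε, hpos⟩ := eventually_nhds_iff_ball.1
    (eventually_forall_curveDeriv_pos (hHt.of_le one_le_two) hx hHt0 isCompact_Icc)
  refine ⟨ε, hε, fun s hs _ xs hxs => ?_⟩
  have hs : s ∈ ball 0 ε := by rwa [mem_ball, Real.dist_0_eq_abs]
  rw [integral_transformed_eq_integral_pulledBackLagrangian (hHt.of_le one_le_two)
    (hHx.of_le one_le_two) hx hαβ (fun t ht => hpos s hs t (Ioo_subset_Icc_self ht))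
    (fun t ht => hxs t (Ioo_subset_Icc_self ht))]
  refine integral_congr fun t ht => ?_
  rw [uIcc_of_le hαβ] at ht
  have hderiv : ∀ σ ∈ ball (0 : ℝ) ε,
      HasDerivAt (fun σ => pulledBackLagrangian L Ht Hx x σ t) 0 σ := fun σ hσ => by
    simpa [pulledBackLagrangian, hZ] using hasDerivAt_pulledBackLagrangian
      hL.differentiable_one hHt hHx hT.differentiable_one hX.differentiable_one
      hx.differentiable_one hHts hHxs (hpos σ hσ t ht).ne'
  rw [isOpen_ball.is_const_of_deriv_eq_zero (convex_ball 0 ε).isPreconnected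
      (fun σ hσ => (hderiv σ hσ).differentiableAt.differentiableWithinAt)
      (fun σ hσ => (hderiv σ hσ).deriv) hs (mem_ball_self hε),
    pulledBackLagrangian_zero (hHt.differentiable two_ne_zero) hx.differentiable_one
      hHt0 (hHx.differentiable two_ne_zero) hHx0]

theorem hasDerivAt_integral_pulledBackLagrangian (α β : ℝ) :
    HasDerivAt (fun s => ∫ t in α..β, pulledBackLagrangian L Ht Hx x s t)
      (∫ t in α..β, invarianceDefect L T X (t, x t, deriv x t)) 0 := by
  have hHt₁ := hHt.of_le one_le_two
  have hHx₁ := hHx.of_le one_le_two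
  set U := {s : ℝ | ∀ t ∈ [[α, β]], 0 < curveDeriv Ht x s t}
  have hU : U ∈ 𝓝 0 := eventually_forall_curveDeriv_pos hHt₁ hx hHt0 isCompact_uIcc
  have hcont {L' : ℝ × E × E → ℝ} (hL' : Continuous L') {s t : ℝ} (hs : s ∈ U)
      (ht : t ∈ [[α, β]]) :
      ContinuousAt (fun st : ℝ × ℝ => pulledBackLagrangian L' Ht Hx x st.1 st.2) (s, t) :=
    continuousAt_pulledBackLagrangian hL' hHt₁ hHx₁ hx (hs t ht).ne'
  have hΦ := hasDerivAt_intervalIntegral_of_continuousOn (F := pulledBackLagrangian L Ht Hx x)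
    (F' := pulledBackLagrangian (invarianceDefect L T X) Ht Hx x) hU
    (fun s hs t ht => ((hcont hL.continuous hs ht).comp
      (continuousAt_const.prodMk continuousAt_id)).continuousWithinAt)
    (fun z hz => (hcont (continuous_invarianceDefect hL hT hX) hz.1 hz.2).continuousWithinAt)
    (fun s hs t ht => hasDerivAt_pulledBackLagrangian hL.differentiable_one hHt hHx
      hT.differentiable_one hX.differentiable_one hx.differentiable_one hHts hHxs (hs t ht).ne')
  simpa only [pulledBackLagrangian_zero hHt₁.differentiable_one hx.differentiable_one hHt0
    hHx₁.differentiable_one hHx0] using hΦ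

theorem integral_invarianceDefect_eq_zero {α β : ℝ} (hαβ : α ≤ β)
    (hinv : IsInvariantAlong L Ht Hx x α β) :
    ∫ t in α..β, invarianceDefect L T X (t, x t, deriv x t) = 0 :=
  (hasDerivAt_integral_pulledBackLagrangian hL hHt hHx hT hX hHt0 hHx0 hHts hHxs hx α β).unique
    ((hasDerivAt_const 0 _).congr_of_eventuallyEq
      (eventually_integral_pulledBackLagrangian_eq (hHt.of_le one_le_two)
        (hHx.of_le one_le_two) hx hHt0 hαβ hinv))

end Flow

end VariationalInvariance

open VariationalInvariance

theorem stmt_1_general (n : ℕ)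
    (L : ℝ × (Fin n → ℝ) × (Fin n → ℝ) → ℝ) (hL : ContDiff ℝ 1 L)
    (Ht : ℝ × ℝ × (Fin n → ℝ) → ℝ) (Hx : ℝ × ℝ × (Fin n → ℝ) → (Fin n → ℝ))
    (hHt : ContDiff ℝ 2 Ht) (hHx : ContDiff ℝ 2 Hx)
    (T : ℝ × (Fin n → ℝ) → ℝ) (X : ℝ × (Fin n → ℝ) → (Fin n → ℝ))
    (hT : ContDiff ℝ 1 T) (hX : ContDiff ℝ 1 X)
    (hHt0 : ∀ (t : ℝ) (y : Fin n → ℝ), Ht (0, t, y) = t)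
    (hHx0 : ∀ (t : ℝ) (y : Fin n → ℝ), Hx (0, t, y) = y)
    (hHts : ∀ (s t : ℝ) (y : Fin n → ℝ),
      deriv (fun s' => Ht (s', t, y)) s = T (Ht (s, t, y), Hx (s, t, y)))
    (hHxs : ∀ (s t : ℝ) (y : Fin n → ℝ),
      deriv (fun s' => Hx (s', t, y)) s = X (Ht (s, t, y), Hx (s, t, y))) :
    (∀ x : ℝ → Fin n → ℝ, ContDiff ℝ 1 x →
      ∀ a b α β : ℝ, a ≤ α → α ≤ β → β ≤ b →
      ∃ ε > (0:ℝ), ∀ s : ℝ, |s| < ε →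
        (∀ t ∈ Set.Icc α β, 0 < deriv (fun u => Ht (s, u, x u)) t) →
        ∀ xs : ℝ → Fin n → ℝ,
          (∀ t ∈ Set.Icc α β, xs (Ht (s, t, x t)) = Hx (s, t, x t)) →
          (∫ τ in (Ht (s, α, x α))..(Ht (s, β, x β)), L (τ, xs τ, deriv xs τ))
            = ∫ t in α..β, L (t, x t, deriv x t))
    ↔ (∀ (t : ℝ) (y v : Fin n → ℝ),
        fderiv ℝ L (t, y, v) (1, 0, 0) * T (t, y)
          + fderiv ℝ L (t, y, v) (0, X (t, y), 0)
          + fderiv ℝ L (t, y, v)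
              (0, 0, fderiv ℝ X (t, y) (1, v) - fderiv ℝ T (t, y) (1, v) • v)
          + L (t, y, v) * fderiv ℝ T (t, y) (1, v) = 0) := by
  constructor
  · intro hinv t y v
    -- test the invariance on straight lines through `(t, y)` with velocity `v`
    set x : ℝ → Fin n → ℝ := fun u => y + (u - t) • v
    have hx : ContDiff ℝ 1 x := by fun_prop
    have hx' (u : ℝ) : deriv x u = v :=
      ((((hasDerivAt_id u).sub_const t).smul_const v).const_add y).deriv.trans (one_smul ℝ v)
    have hcont : Continuous fun u => invarianceDefect L T X (u, x u, v) :=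
      (continuous_invarianceDefect hL hT hX).comp (by fun_prop)
    have hZ := hcont.eq_zero_of_forall_intervalIntegral_eq_zero fun α β hαβ => by
      simpa only [hx'] using integral_invarianceDefect_eq_zero hL hHt hHx hT hX hHt0 hHx0
        hHts hHxs hx hαβ (hinv x hx α β α β le_rfl hαβ le_rfl)
    have hZt := congr_fun hZ t
    simp only [x, sub_self, zero_smul, add_zero, Pi.zero_apply] at hZt
    exact hZt
  · intro hZ x hx a b α β _ hαβ _
    exact isInvariantAlong_of_invarianceDefect_eq_zero hL hHt hHx hT hX hHt0 hHx0 hHts hHxs hx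
      (funext fun ⟨t, y, v⟩ => hZ t y v) hαβ

/-- Necessary and sufficient condition of invariance for the fundamental
problem of the calculus of variations (Corollary of Theorem 1, m = 1):
the functional `∫ L(t,x,x') dt` is invariant under the local one-parameter
group of transformations `(Ht, Hx)` with infinitesimal generators `T`, `X`
if and only if
`∂L/∂t·T + ∇ₓL·X + ∇ᵥL·(dX/dt − v·dT/dt) + L·dT/dt = 0` for all `(t,x,v)`. -/
theorem stmt_1 (n : ℕ) (hn : 1 ≤ n)
    (L : ℝ × (Fin n → ℝ) × (Fin n → ℝ) → ℝ) (hL : ContDiff ℝ 1 L)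
    (Ht : ℝ × ℝ × (Fin n → ℝ) → ℝ) (Hx : ℝ × ℝ × (Fin n → ℝ) → (Fin n → ℝ))
    (hHt : ContDiff ℝ 2 Ht) (hHx : ContDiff ℝ 2 Hx)
    (T : ℝ × (Fin n → ℝ) → ℝ) (X : ℝ × (Fin n → ℝ) → (Fin n → ℝ))
    (hT : ContDiff ℝ 1 T) (hX : ContDiff ℝ 1 X)
    (hHt0 : ∀ (t : ℝ) (y : Fin n → ℝ), Ht (0, t, y) = t)
    (hHx0 : ∀ (t : ℝ) (y : Fin n → ℝ), Hx (0, t, y) = y)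
    (hHts : ∀ (s t : ℝ) (y : Fin n → ℝ),
      deriv (fun s' => Ht (s', t, y)) s = T (Ht (s, t, y), Hx (s, t, y)))
    (hHxs : ∀ (s t : ℝ) (y : Fin n → ℝ),
      deriv (fun s' => Hx (s', t, y)) s = X (Ht (s, t, y), Hx (s, t, y)))
    (hTdef : ∀ (t : ℝ) (y : Fin n → ℝ), T (t, y) = deriv (fun s => Ht (s, t, y)) 0)
    (hXdef : ∀ (t : ℝ) (y : Fin n → ℝ), X (t, y) = deriv (fun s => Hx (s, t, y)) 0) :
    (∀ x : ℝ → Fin n → ℝ, ContDiff ℝ 1 x →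
      ∀ a b α β : ℝ, a ≤ α → α ≤ β → β ≤ b →
      ∃ ε > (0:ℝ), ∀ s : ℝ, |s| < ε →
        (∀ t ∈ Set.Icc α β, 0 < deriv (fun u => Ht (s, u, x u)) t) →
        ∀ xs : ℝ → Fin n → ℝ,
          (∀ t ∈ Set.Icc α β, xs (Ht (s, t, x t)) = Hx (s, t, x t)) →
          (∫ τ in (Ht (s, α, x α))..(Ht (s, β, x β)), L (τ, xs τ, deriv xs τ))
            = ∫ t in α..β, L (t, x t, deriv x t))
    ↔ (∀ (t : ℝ) (y v : Fin n → ℝ),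
        fderiv ℝ L (t, y, v) (1, 0, 0) * T (t, y)
          + fderiv ℝ L (t, y, v) (0, X (t, y), 0)
          + fderiv ℝ L (t, y, v)
              (0, 0, fderiv ℝ X (t, y) (1, v) - fderiv ℝ T (t, y) (1, v) • v)
          + L (t, y, v) * fderiv ℝ T (t, y) (1, v) = 0) :=
  stmt_1_general n L hL Ht Hx hHt hHx T X hT hX hHt0 hHx0 hHts hHxs
end

section
/- Let n ≥ 1 and let L : ℝ × ℝⁿ × ℝⁿ → ℝ, written L(t,x,v), be of class C². Let T : ℝ × ℝⁿ → ℝ and X : ℝ × ℝⁿ → ℝⁿ be C¹ maps satisfying, for all (t,x,v) ∈ ℝ × ℝⁿ × ℝⁿ: ∂L/∂t(t,x,v)·T(t,x) + ∇_x L(t,x,v)·X(t,x) + ∇_v L(t,x,v)·(∂X/∂t(t,x) + D_x X(t,x)·v − v·(∂T/∂t(t,x) + ∇_x T(t,x)·v)) + L(t,x,v)·(∂T/∂t(t,x) + ∇_x T(t,x)·v) = 0, where D_x X denotes the Jacobian matrix of X with respect to x. Then for every C² curve x : [a,b] → ℝⁿ satisfying the Euler–Lagrange equation (d/dt)[∇_v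 L(t,x(t),x'(t))] = ∇_x L(t,x(t),x'(t)) on [a,b], the function t ↦ ∇_v L(t,x(t),x'(t))·X(t,x(t)) + (L(t,x(t),x'(t)) − ∇_v L(t,x(t),x'(t))·x'(t))·T(t,x(t)) is constant on [a,b]. -/
/-!
Differentiate the Noether charge `∇_v L · X + (L - ∇_v L · x') T` along the curve. By the chain
rule its derivative involves the time derivative of `∇_v L` along the curve; the Euler–Lagrange
equation replaces it by `∇_x L`, and what remains is exactly the left-hand side of the symmetry
identity at `(t, x t, x' t)`, which vanishes.
-/

open Set

variable {E : Type*} [NormedAddCommGroup E] [NormedSpace ℝ E]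

noncomputable def noetherCharge (L : ℝ × E × E → ℝ) (T : ℝ × E → ℝ) (X : ℝ × E → E) (x : ℝ → E)
    (s : ℝ) : ℝ :=
  fderiv ℝ L (s, x s, deriv x s) (0, 0, X (s, x s))
    + (L (s, x s, deriv x s) - fderiv ℝ L (s, x s, deriv x s) (0, 0, deriv x s)) * T (s, x s)

/-- `fderiv ℝ T (t, y) (1, v)` is the total derivative `∂T/∂t + ∇_x T · v`, and similarly for
`X`. -/
def IsVariationalSymmetry (L : ℝ × E × E → ℝ) (T : ℝ × E → ℝ) (X : ℝ × E → E) : Prop :=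
  ∀ (t : ℝ) (y v : E),
    fderiv ℝ L (t, y, v) (1, 0, 0) * T (t, y)
      + fderiv ℝ L (t, y, v) (0, X (t, y), 0)
      + fderiv ℝ L (t, y, v) (0, 0, fderiv ℝ X (t, y) (1, v) - fderiv ℝ T (t, y) (1, v) • v)
      + L (t, y, v) * fderiv ℝ T (t, y) (1, v) = 0

def SatisfiesEulerLagrangeAt (L : ℝ × E × E → ℝ) (x : ℝ → E) (t : ℝ) : Prop :=
  ∀ w : E, deriv (fun s => fderiv ℝ L (s, x s, deriv x s) (0, 0, w)) t
    = fderiv ℝ L (t, x t, deriv x t) (0, w, 0)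

theorem ContinuousLinearMap.apply_mk_mk_eq_add {F : Type*} [NormedAddCommGroup F]
    [NormedSpace ℝ F] (p : ℝ × E × E →L[ℝ] F) (a : ℝ) (u w : E) :
    p (a, u, w) = a • p (1, 0, 0) + p (0, u, 0) + p (0, 0, w) := by
  rw [← map_smul, ← map_add, ← map_add]
  simp

variable {L : ℝ × E × E → ℝ} {T : ℝ × E → ℝ} {X : ℝ × E → E} {x : ℝ → E} {t : ℝ}

theorem hasDerivAt_jet (hx : DifferentiableAt ℝ x t) (hx' : DifferentiableAt ℝ (deriv x) t) :
    HasDerivAt (fun s => (s, x s, deriv x s)) (1, deriv x t, deriv (deriv x) t) t :=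
  (hasDerivAt_id t).prodMk (hx.hasDerivAt.prodMk hx'.hasDerivAt)

theorem SatisfiesEulerLagrangeAt.deriv_fderiv_apply (hEL : SatisfiesEulerLagrangeAt L x t)
    (hΦ : DifferentiableAt ℝ (fun s => fderiv ℝ L (s, x s, deriv x s)) t) (w : E) :
    deriv (fun s => fderiv ℝ L (s, x s, deriv x s)) t (0, 0, w)
      = fderiv ℝ L (t, x t, deriv x t) (0, w, 0) := by
  rw [← hEL w, (hΦ.hasDerivAt.clm_apply (hasDerivAt_const t ((0 : ℝ), (0 : E), w))).deriv,
    map_zero, add_zero]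

theorem hasDerivAt_noetherCharge (hsym : IsVariationalSymmetry L T X)
    (hL : ContDiffAt ℝ 2 L (t, x t, deriv x t)) (hT : DifferentiableAt ℝ T (t, x t))
    (hX : DifferentiableAt ℝ X (t, x t)) (hx : DifferentiableAt ℝ x t)
    (hx' : DifferentiableAt ℝ (deriv x) t) (hEL : SatisfiesEulerLagrangeAt L x t) :
    HasDerivAt (noetherCharge L T X x) 0 t := by
  have hjet := hasDerivAt_jet hx hx'
  have hΦ : DifferentiableAt ℝ (fun s => fderiv ℝ L (s, x s, deriv x s)) t :=
    ((hL.fderiv_right le_rfl).differentiableAt one_ne_zero).comp t hjet.differentiableAt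
  have hcurve : HasDerivAt (fun s => (s, x s)) (1, deriv x t) t :=
    (hasDerivAt_id t).prodMk hx.hasDerivAt
  have hXc := hX.hasFDerivAt.comp_hasDerivAt t hcurve
  have hTc := hT.hasFDerivAt.comp_hasDerivAt t hcurve
  have hLc := (hL.differentiableAt two_ne_zero).hasFDerivAt.comp_hasDerivAt t hjet
  have hA := hΦ.hasDerivAt.clm_apply
    ((hasDerivAt_const t (0 : ℝ)).prodMk ((hasDerivAt_const t (0 : E)).prodMk hXc))
  have hB := hΦ.hasDerivAt.clm_apply
    ((hasDerivAt_const t (0 : ℝ)).prodMk ((hasDerivAt_const t (0 : E)).prodMk hx'.hasDerivAt))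
  refine (hA.add ((hLc.sub hB).mul hTc)).congr_deriv ?_
  have hs := hsym t (x t) (deriv x t)
  set p := fderiv ℝ L (t, x t, deriv x t)
  set Xd := fderiv ℝ X (t, x t) (1, deriv x t)
  set Td := fderiv ℝ T (t, x t) (1, deriv x t)
  have hvel : p (0, 0, Xd - Td • deriv x t) = p (0, 0, Xd) - Td * p (0, 0, deriv x t) := by
    rw [← smul_eq_mul, ← map_smul, ← map_sub]
    simp
  simp only [Function.comp_apply, Pi.sub_apply, hEL.deriv_fderiv_apply hΦ,
    p.apply_mk_mk_eq_add 1 (deriv x t), one_smul]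
  linear_combination hs - hvel

theorem stmt_3_general (n : ℕ)
    (L : ℝ × (Fin n → ℝ) × (Fin n → ℝ) → ℝ) (hL : ContDiff ℝ 2 L)
    (T : ℝ × (Fin n → ℝ) → ℝ) (X : ℝ × (Fin n → ℝ) → (Fin n → ℝ))
    (hT : ContDiff ℝ 1 T) (hX : ContDiff ℝ 1 X)
    (hsym : ∀ (t : ℝ) (y v : Fin n → ℝ),
      fderiv ℝ L (t, y, v) (1, 0, 0) * T (t, y)
        + fderiv ℝ L (t, y, v) (0, X (t, y), 0)
        + fderiv ℝ L (t, y, v)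
            (0, 0, fderiv ℝ X (t, y) (1, v) - fderiv ℝ T (t, y) (1, v) • v)
        + L (t, y, v) * fderiv ℝ T (t, y) (1, v) = 0)
    (a b : ℝ)
    (x : ℝ → Fin n → ℝ) (hx : ContDiff ℝ 2 x)
    (hEL : ∀ t ∈ Set.Icc a b, ∀ w : Fin n → ℝ,
      deriv (fun s => fderiv ℝ L (s, x s, deriv x s) (0, 0, w)) t
        = fderiv ℝ L (t, x t, deriv x t) (0, w, 0)) :
    ∃ c : ℝ, ∀ t ∈ Set.Icc a b,
      fderiv ℝ L (t, x t, deriv x t) (0, 0, X (t, x t))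
        + (L (t, x t, deriv x t)
            - fderiv ℝ L (t, x t, deriv x t) (0, 0, deriv x t)) * T (t, x t)
        = c := by
  have hx' : Differentiable ℝ (deriv x) := hx.differentiable_deriv_two
  have hcharge : ∀ t ∈ Icc a b, HasDerivAt (noetherCharge L T X x) 0 t := fun t ht =>
    hasDerivAt_noetherCharge hsym hL.contDiffAt (hT.differentiable one_ne_zero _)
      (hX.differentiable one_ne_zero _) (hx.differentiable two_ne_zero t) (hx' t) (hEL t ht)
  refine ⟨noetherCharge L T X x a, fun t ht => ?_⟩
  exact constant_of_has_deriv_right_zero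
    (fun s hs => (hcharge s hs).continuousAt.continuousWithinAt)
    (fun s hs => (hcharge s (Ico_subset_Icc_self hs)).hasDerivWithinAt) t ht

/-- Noether's theorem for the fundamental problem of the calculus of
variations (Corollary of Theorem 2, m = 1): if the generators `T`, `X`
satisfy the variational-symmetry identity, then along every solution of the
Euler–Lagrange equation the quantity
`∇_v L·X + (L − ∇_v L·x')·T` is constant. -/
theorem stmt_3 (n : ℕ) (hn : 1 ≤ n)
    (L : ℝ × (Fin n → ℝ) × (Fin n → ℝ) → ℝ) (hL : ContDiff ℝ 2 L)
    (T : ℝ × (Fin n → ℝ) → ℝ) (X : ℝ × (Fin n → ℝ) → (Fin n → ℝ))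
    (hT : ContDiff ℝ 1 T) (hX : ContDiff ℝ 1 X)
    (hsym : ∀ (t : ℝ) (y v : Fin n → ℝ),
      fderiv ℝ L (t, y, v) (1, 0, 0) * T (t, y)
        + fderiv ℝ L (t, y, v) (0, X (t, y), 0)
        + fderiv ℝ L (t, y, v)
            (0, 0, fderiv ℝ X (t, y) (1, v) - fderiv ℝ T (t, y) (1, v) • v)
        + L (t, y, v) * fderiv ℝ T (t, y) (1, v) = 0)
    (a b : ℝ) (hab : a ≤ b)
    (x : ℝ → Fin n → ℝ) (hx : ContDiff ℝ 2 x)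
    (hEL : ∀ t ∈ Set.Icc a b, ∀ w : Fin n → ℝ,
      deriv (fun s => fderiv ℝ L (s, x s, deriv x s) (0, 0, w)) t
        = fderiv ℝ L (t, x t, deriv x t) (0, w, 0)) :
    ∃ c : ℝ, ∀ t ∈ Set.Icc a b,
      fderiv ℝ L (t, x t, deriv x t) (0, 0, X (t, x t))
        + (L (t, x t, deriv x t)
            - fderiv ℝ L (t, x t, deriv x t) (0, 0, deriv x t)) * T (t, x t)
        = c :=
  stmt_3_general n L hL T X hT hX hsym a b x hx hEL
end

section
/- Let n, m ≥ 1, and let L : ℤ × (ℝⁿ)^{m+1} → ℝ, written L(k, y₀, y₁, …, y_m), be continuously differentiable in its vector arguments (y₀,…,y_m) for each k. Fix integers M and N ≥ 1, and let x : ℤ → ℝⁿ be a sequence that minimizes J[y] = Σ_{k=M}^{M+N−1} L(k, y(k), y(k+1), …, y(k+m)) over all sequences y : ℤ → ℝⁿ satisfying y(i) = x(i) for all i with M ≤ i ≤ M+m−1 and for all i with M+N ≤ i ≤ M+N+m−1. Then for every k with M ≤ k ≤ M+N−1−m, Σ_{j=0}^{m} ∇_{y_j}L(k+m−j, x(k+m−j),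 x(k+m−j+1), …, x(k+2m−j)) = 0. -/
/-!
A minimizer `x` of the action is in particular a minimizer along every line `t ↦ x + t • δ`
whose points are admissible, so the line derivative of the action in direction `δ` vanishes.
Taking `δ` to be the sequence that equals `w` at the single node `p = k + m` and `0` elsewhere,
only the `m + 1` terms `L (p - j)` of the action see the variation, and the variation enters
`L (p - j)` through its `j`-th argument; the vanishing line derivative is then exactly the
Euler–Lagrange sum.
-/

open Finset

variable {E : Type*}

def window (m : ℕ) (y : ℤ → E) (k : ℤ) : Fin (m + 1) → E :=
  fun j => y (k + (j.val : ℤ))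

section Window

variable [AddCommMonoid E]

theorem window_single_sub (m : ℕ) (p : ℤ) (w : E) (j : Fin (m + 1)) :
    window m (Pi.single p w) (p - j.val) = Pi.single j w := by
  funext i
  by_cases hij : i = j
  · subst hij
    simp [window]
  · have hp : p - (j.val : ℤ) + i.val ≠ p := fun h => hij (Fin.ext (by omega))
    simp [window, hp, hij]

theorem window_single_eq_zero {m : ℕ} {p k : ℤ} (w : E) (hk : ∀ j : Fin (m + 1), k + j.val ≠ p) :
    window m (Pi.single p w) k = 0 := by
  funext j
  simp [window, hk j]

theorem sum_apply_window_single {F : Type*} [AddCommMonoid F] {m : ℕ}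
    (ℓ : ℤ → (Fin (m + 1) → E) → F) (hℓ : ∀ k, ℓ k 0 = 0) {s : Finset ℤ} {p : ℤ}
    (hs : Icc (p - m) p ⊆ s) (w : E) :
    ∑ k ∈ s, ℓ k (window m (Pi.single p w) k) = ∑ j : Fin (m + 1), ℓ (p - j.val) (Pi.single j w) := by
  have himage : univ.image (fun j : Fin (m + 1) => p - j.val) ⊆ s := by
    intro k hk
    obtain ⟨j, -, rfl⟩ := mem_image.1 hk
    exact hs (mem_Icc.2 ⟨by omega, by omega⟩)
  rw [← sum_subset himage, sum_image]
  · simp only [window_single_sub]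
  · intro i _ j _ hij
    exact Fin.ext (by simpa using hij)
  · intro k _ hk
    rw [window_single_eq_zero w, hℓ]
    intro j hj
    exact hk (mem_image.2 ⟨j, mem_univ _, by omega⟩)

end Window

section Action

variable [NormedAddCommGroup E] [NormedSpace ℝ E]

def action {m : ℕ} (L : ℤ → (Fin (m + 1) → E) → ℝ) (s : Finset ℤ) (y : ℤ → E) : ℝ :=
  ∑ k ∈ s, L k (window m y k)

theorem hasLineDerivAt_action {m : ℕ} {L : ℤ → (Fin (m + 1) → E) → ℝ} {s : Finset ℤ}
    {x : ℤ → E} (hL : ∀ k ∈ s, DifferentiableAt ℝ (L k) (window m x k)) (v : ℤ → E) :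
    HasLineDerivAt ℝ (action L s) (∑ k ∈ s, fderiv ℝ (L k) (window m x k) (window m v k)) x v :=
  HasDerivAt.fun_sum fun k hk => (hL k hk).hasFDerivAt.hasLineDerivAt (window m v k)

/-- The discrete Euler–Lagrange equation at an interior node `p`. -/
theorem sum_fderiv_single_eq_zero_of_isMinOn {m : ℕ}
    {L : ℤ → (Fin (m + 1) → E) → ℝ} {s : Finset ℤ} {S : Set (ℤ → E)} {x : ℤ → E} {p : ℤ}
    (hmin : IsMinOn (action L s) S x) (hL : ∀ k ∈ s, DifferentiableAt ℝ (L k) (window m x k))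
    (hs : Icc (p - m) p ⊆ s) (w : E) (hS : ∀ t : ℝ, x + t • (Pi.single p w : ℤ → E) ∈ S) :
    ∑ j : Fin (m + 1), fderiv ℝ (L (p - j.val)) (window m x (p - j.val)) (Pi.single j w) = 0 := by
  rw [← sum_apply_window_single (fun k => fderiv ℝ (L k) (window m x k)) (fun k => map_zero _) hs]
  exact hmin.hasLineDerivAt_eq_zero (hasLineDerivAt_action hL _) (Filter.Eventually.of_forall hS)

end Action

theorem stmt_4_general (n m : ℕ)
    (L : ℤ → (Fin (m+1) → Fin n → ℝ) → ℝ)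
    (hL : ∀ k : ℤ, ContDiff ℝ 1 (L k))
    (M N : ℤ)
    (x : ℤ → Fin n → ℝ)
    (hmin : ∀ y : ℤ → Fin n → ℝ,
      (∀ i : ℤ, M ≤ i → i ≤ M + m - 1 → y i = x i) →
      (∀ i : ℤ, M + N ≤ i → i ≤ M + N + m - 1 → y i = x i) →
      (∑ k ∈ Finset.Icc M (M + N - 1), L k (fun j => x (k + (j.val : ℤ)))) ≤
      (∑ k ∈ Finset.Icc M (M + N - 1), L k (fun j => y (k + (j.val : ℤ))))) :
    ∀ k : ℤ, M ≤ k → k ≤ M + N - 1 - m → ∀ w : Fin n → ℝ,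
      (∑ j : Fin (m+1),
        fderiv ℝ (L (k + m - (j.val : ℤ)))
          (fun r => x (k + m - (j.val : ℤ) + (r.val : ℤ)))
          (Pi.single j w)) = 0 := by
  intro k hkM hkN w
  let admissible : Set (ℤ → Fin n → ℝ) := {y |
    (∀ i : ℤ, M ≤ i → i ≤ M + m - 1 → y i = x i) ∧
    (∀ i : ℤ, M + N ≤ i → i ≤ M + N + m - 1 → y i = x i)}
  have hvar : ∀ t : ℝ, x + t • (Pi.single (k + m) w : ℤ → Fin n → ℝ) ∈ admissible := fun t =>
    ⟨fun i _ _ => by simp [show i ≠ k + m by omega],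
     fun i _ _ => by simp [show i ≠ k + m by omega]⟩
  refine sum_fderiv_single_eq_zero_of_isMinOn (S := admissible) (fun y hy => hmin y hy.1 hy.2)
    (fun k' _ => (hL k').differentiable one_ne_zero _) ?_ w hvar
  intro i hi
  simp only [mem_Icc] at hi ⊢
  omega

/-- Discrete Euler–Lagrange equation (necessary optimality condition) for the
discrete-time higher-order problem of the calculus of variations. -/
theorem stmt_4 (n m : ℕ) (hn : 1 ≤ n) (hm : 1 ≤ m)
    (L : ℤ → (Fin (m+1) → Fin n → ℝ) → ℝ)
    (hL : ∀ k : ℤ, ContDiff ℝ 1 (L k))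
    (M N : ℤ) (hN : 1 ≤ N)
    (x : ℤ → Fin n → ℝ)
    (hmin : ∀ y : ℤ → Fin n → ℝ,
      (∀ i : ℤ, M ≤ i → i ≤ M + m - 1 → y i = x i) →
      (∀ i : ℤ, M + N ≤ i → i ≤ M + N + m - 1 → y i = x i) →
      (∑ k ∈ Finset.Icc M (M + N - 1), L k (fun j => x (k + (j.val : ℤ)))) ≤
      (∑ k ∈ Finset.Icc M (M + N - 1), L k (fun j => y (k + (j.val : ℤ))))) :
    ∀ k : ℤ, M ≤ k → k ≤ M + N - 1 - m → ∀ w : Fin n → ℝ,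
      (∑ j : Fin (m+1),
        fderiv ℝ (L (k + m - (j.val : ℤ)))
          (fun r => x (k + m - (j.val : ℤ) + (r.val : ℤ)))
          (Pi.single j w)) = 0 :=
  stmt_4_general n m L hL M N x hmin
end

section
/- Let n, m ≥ 1, and let L : ℤ × (ℝⁿ)^{m+1} → ℝ, written L(k, y₀, y₁, …, y_m), be continuously differentiable in its vector arguments (y₀,…,y_m) for each k. Let h : ℝ × ℤ × ℝⁿ → ℝⁿ, (s,k,y) ↦ h^s(k,y), be a local one-parameter group of transformations: h⁰(k,y) = y and ∂h^s/∂s(s,k,y) = X(k, h^s(k,y)) for all s, where X(k,y) = ∂h^s/∂s(0,k,y) is the infinitesimal generator. Then the following are equivalent. (i) Invariance: for every k ∈ ℤ, every (y₀,…,y_m) ∈ (ℝⁿ)^{m+1}, and every s in a neighborhood of 0, L(k, h^s(k,y₀), h^s(k+1,y₁), …, h^s(k+m,y_m)) = L(k, y₀, y₁, …, y_m). (ii) For every k ∈ ℤ and every (y₀,…,y_m) ∈ (ℝⁿ)^{m+1}: Σ_{j=0}^{m} ∇_{y_j}L(k, y₀, …, y_m)·X(k+j, y_j) = 0. -/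
/-!
Along the flow, `s ↦ L(k, h^s(k, y₀), …, h^s(k+m, y_m))` has derivative
`Σⱼ ∇_{y_j}L · X(k+j, ·)` evaluated at the transported point, by the chain rule. Local invariance
makes this vanish at `s = 0`, which is condition (ii) at an arbitrary point; conversely, if (ii)
holds everywhere the derivative vanishes for every `s`, so the function is constant.
-/

open Topology

section FlowInvariance

variable {E F : Type*} [NormedAddCommGroup E] [NormedSpace ℝ E]
  [NormedAddCommGroup F] [NormedSpace ℝ F]
  {f : E → F} {φ : ℝ → E → E} {V : E → E}

theorem hasDerivAt_comp_flow (hf : Differentiable ℝ f)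
    (hφ : ∀ s x, HasDerivAt (fun t => φ t x) (V (φ s x)) s) (s : ℝ) (x : E) :
    HasDerivAt (fun t => f (φ t x)) (fderiv ℝ f (φ s x) (V (φ s x))) s :=
  (hf _).hasFDerivAt.comp_hasDerivAt s (hφ s x)

theorem fderiv_apply_eq_zero_of_eventually_invariant (hf : Differentiable ℝ f)
    (hφ0 : ∀ x, φ 0 x = x) (hφ : ∀ s x, HasDerivAt (fun t => φ t x) (V (φ s x)) s)
    {x : E} {ε : ℝ} (hε : 0 < ε) (hinv : ∀ s, |s| < ε → f (φ s x) = f x) :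
    fderiv ℝ f x (V x) = 0 := by
  have hconst : (fun t => f (φ t x)) =ᶠ[𝓝 0] fun _ => f x := by
    filter_upwards [Metric.ball_mem_nhds 0 hε] with s hs
    exact hinv s (by simpa using hs)
  simpa [hφ0, hconst.deriv_eq] using (hasDerivAt_comp_flow hf hφ 0 x).deriv.symm

theorem comp_flow_eq_of_fderiv_apply_eq_zero (hf : Differentiable ℝ f)
    (hφ0 : ∀ x, φ 0 x = x) (hφ : ∀ s x, HasDerivAt (fun t => φ t x) (V (φ s x)) s)
    (hV : ∀ x, fderiv ℝ f x (V x) = 0) (s : ℝ) (x : E) :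
    f (φ s x) = f x := by
  have hderiv := hasDerivAt_comp_flow hf hφ
  simpa [hφ0] using is_const_of_deriv_eq_zero (fun t => (hderiv t x).differentiableAt)
    (fun t => (hderiv t x).deriv.trans (hV _)) s 0

theorem eventually_invariant_iff_fderiv_apply_eq_zero (hf : Differentiable ℝ f)
    (hφ0 : ∀ x, φ 0 x = x) (hφ : ∀ s x, HasDerivAt (fun t => φ t x) (V (φ s x)) s) :
    (∀ x, ∃ ε > (0 : ℝ), ∀ s, |s| < ε → f (φ s x) = f x) ↔ ∀ x, fderiv ℝ f x (V x) = 0 :=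
  ⟨fun hinv x =>
      let ⟨_, hε, hx⟩ := hinv x
      fderiv_apply_eq_zero_of_eventually_invariant hf hφ0 hφ hε hx,
    fun hV _ => ⟨1, one_pos, fun s _ => comp_flow_eq_of_fderiv_apply_eq_zero hf hφ0 hφ hV s _⟩⟩

end FlowInvariance

theorem stmt_5_general (n m : ℕ)
    (L : ℤ → (Fin (m+1) → Fin n → ℝ) → ℝ)
    (hL : ∀ k : ℤ, ContDiff ℝ 1 (L k))
    (h : ℝ → ℤ → (Fin n → ℝ) → (Fin n → ℝ))
    (X : ℤ → (Fin n → ℝ) → (Fin n → ℝ))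
    (hgrp0 : ∀ (k : ℤ) (y : Fin n → ℝ), h 0 k y = y)
    (hdiff : ∀ (k : ℤ) (y : Fin n → ℝ), Differentiable ℝ (fun s => h s k y))
    (hgrp : ∀ (s : ℝ) (k : ℤ) (y : Fin n → ℝ),
      deriv (fun s' => h s' k y) s = X k (h s k y)) :
    (∀ (k : ℤ) (y : Fin (m+1) → Fin n → ℝ), ∃ ε > (0:ℝ), ∀ s : ℝ, |s| < ε →
        L k (fun j => h s (k + (j.val : ℤ)) (y j)) = L k y)
    ↔ (∀ (k : ℤ) (y : Fin (m+1) → Fin n → ℝ),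
        (∑ j : Fin (m+1),
          fderiv ℝ (L k) y (Pi.single j (X (k + (j.val : ℤ)) (y j)))) = 0) := by
  have hflow : ∀ k y s, HasDerivAt (fun t => h t k y) (X k (h s k y)) s := fun k y s => by
    simpa only [hgrp] using (hdiff k y s).hasDerivAt
  refine forall_congr' fun k => ?_
  have hsum : ∀ y : Fin (m+1) → Fin n → ℝ,
      ∑ j, fderiv ℝ (L k) y (Pi.single j (X (k + (j.val : ℤ)) (y j)))
        = fderiv ℝ (L k) y (fun j => X (k + (j.val : ℤ)) (y j)) := fun y => by
    rw [← map_sum, Finset.univ_sum_single]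
  simp only [hsum]
  exact eventually_invariant_iff_fderiv_apply_eq_zero ((hL k).differentiable one_ne_zero)
    (fun y => funext fun j => hgrp0 _ _) (fun s y => hasDerivAt_pi.2 fun j => hflow _ _ s)

/-- Necessary and sufficient condition of invariance for the discrete-time
higher-order problem of the calculus of variations (Theorem 3). -/
theorem stmt_5 (n m : ℕ) (hn : 1 ≤ n) (hm : 1 ≤ m)
    (L : ℤ → (Fin (m+1) → Fin n → ℝ) → ℝ)
    (hL : ∀ k : ℤ, ContDiff ℝ 1 (L k))
    (h : ℝ → ℤ → (Fin n → ℝ) → (Fin n → ℝ))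
    (X : ℤ → (Fin n → ℝ) → (Fin n → ℝ))
    (hgrp0 : ∀ (k : ℤ) (y : Fin n → ℝ), h 0 k y = y)
    (hdiff : ∀ (k : ℤ) (y : Fin n → ℝ), Differentiable ℝ (fun s => h s k y))
    (hgrp : ∀ (s : ℝ) (k : ℤ) (y : Fin n → ℝ),
      deriv (fun s' => h s' k y) s = X k (h s k y))
    (hXdef : ∀ (k : ℤ) (y : Fin n → ℝ), X k y = deriv (fun s => h s k y) 0) :
    (∀ (k : ℤ) (y : Fin (m+1) → Fin n → ℝ), ∃ ε > (0:ℝ), ∀ s : ℝ, |s| < ε →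
        L k (fun j => h s (k + (j.val : ℤ)) (y j)) = L k y)
    ↔ (∀ (k : ℤ) (y : Fin (m+1) → Fin n → ℝ),
        (∑ j : Fin (m+1),
          fderiv ℝ (L k) y (Pi.single j (X (k + (j.val : ℤ)) (y j)))) = 0) :=
  stmt_5_general n m L hL h X hgrp0 hdiff hgrp
end

section
/- Consider the Lagrangian L(t,x,v) = t·v². Let T, X : (0,∞) × ℝ → ℝ be continuously differentiable. Then T and X satisfy the variational-symmetry identity v²·T(t,x) + 2t·v·(∂X/∂t(t,x) + ∂X/∂x(t,x)·v − v·(∂T/∂t(t,x) + ∂T/∂x(t,x)·v)) + t·v²·(∂T/∂t(t,x) + ∂T/∂x(t,x)·v) = 0 for all t > 0, x ∈ ℝ, v ∈ ℝ, if and only if there exist constants C₁, C₂, C₃ such that T(t,x) = (2·C₁·ln t + C₃)·t and X(t,x) = C₁·x + C₂ for all t > 0, x ∈ ℝ. -/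
/-!
The identity is a cubic in `v` with coefficients `2t X_t`, `T + 2t X_x - t T_t` and `-t T_x`, so it
holds for all `v` iff these vanish. Then `T` depends on `t` alone and `X` on `x` alone, so
`T(t) + 2t X'(x) = t T'(t)` separates: `X' = C₁` is constant, and `(T/t)' = 2C₁/t` integrates to
`T = (2C₁ log t + C₃) t`.
-/

open Real Set

lemma coeffs_eq_zero_of_forall_cubic_eq_zero {a b c : ℝ}
    (h : ∀ v : ℝ, a * v + b * v ^ 2 + c * v ^ 3 = 0) : a = 0 ∧ b = 0 ∧ c = 0 := by
  have h₁ := h 1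
  have h₂ := h (-1)
  have h₃ := h 2
  refine ⟨?_, ?_, ?_⟩ <;> linarith

lemma symmetry_identity_iff {t τ a b c d : ℝ} (ht : t ≠ 0) :
    (∀ v : ℝ, v ^ 2 * τ + 2 * t * v * (a + b * v - v * (c + d * v)) + t * v ^ 2 * (c + d * v) = 0)
      ↔ a = 0 ∧ d = 0 ∧ τ + 2 * t * b - t * c = 0 := by
  have expand : ∀ v : ℝ, v ^ 2 * τ + 2 * t * v * (a + b * v - v * (c + d * v))
      + t * v ^ 2 * (c + d * v)
        = (2 * t * a) * v + (τ + 2 * t * b - t * c) * v ^ 2 + (-t * d) * v ^ 3 :=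
    fun v => by ring
  simp only [expand]
  constructor
  · intro h
    obtain ⟨ha, hb, hd⟩ := coeffs_eq_zero_of_forall_cubic_eq_zero h
    exact ⟨by simpa [ht] using ha, by simpa [ht] using hd, hb⟩
  · rintro ⟨rfl, rfl, hb⟩ v
    simp [hb]

section Slices

variable {𝕜 E F G : Type*} [NontriviallyNormedField 𝕜] [NormedAddCommGroup E] [NormedSpace 𝕜 E]
  [NormedAddCommGroup F] [NormedSpace 𝕜 F] [NormedAddCommGroup G] [NormedSpace 𝕜 G]
  {f : E → F → G} {x : E} {y : F}

lemma DifferentiableAt.slice_fst (hf : DifferentiableAt 𝕜 (fun p : E × F => f p.1 p.2) (x, y)) :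
    DifferentiableAt 𝕜 (fun u => f u y) x := by
  exact hf.comp (f := fun u => (u, y)) x (by fun_prop)

lemma DifferentiableAt.slice_snd (hf : DifferentiableAt 𝕜 (fun p : E × F => f p.1 p.2) (x, y)) :
    DifferentiableAt 𝕜 (fun w => f x w) y := by
  exact hf.comp (f := fun w => (x, w)) y (by fun_prop)

end Slices

lemma exists_eq_mul_add_of_deriv_eq {g : ℝ → ℝ} {c : ℝ} (hg : Differentiable ℝ g)
    (h : ∀ x, deriv g x = c) : ∃ a, ∀ x, g x = c * x + a := by
  obtain ⟨a, ha⟩ := isOpen_univ.exists_eq_add_of_deriv_eq isPreconnected_univ hg.differentiableOn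
    (differentiableOn_id.const_mul c) fun x _ => by simp [h]
  exact ⟨a, fun x => ha (mem_univ x)⟩

lemma exists_eq_mul_log_add_mul {f : ℝ → ℝ} {c : ℝ} (hf : DifferentiableOn ℝ f (Ioi 0))
    (h : ∀ t > 0, t * deriv f t = f t + c * t) : ∃ C, ∀ t > 0, f t = (c * log t + C) * t := by
  have hderiv : ∀ t > 0, HasDerivAt (fun u => f u / u) (c * t⁻¹) t := by
    intro t ht
    have hft := (hf.differentiableAt (Ioi_mem_nhds ht)).hasDerivAt.fun_div (hasDerivAt_id' t) ht.ne'
    refine hft.congr_deriv ?_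
    field_simp
    linarith [h t ht]
  obtain ⟨C, hC⟩ := isOpen_Ioi.exists_eq_add_of_deriv_eq isPreconnected_Ioi
    (fun t ht => (hderiv t ht).differentiableAt.differentiableWithinAt)
    ((differentiableOn_log.mono fun t ht => (mem_Ioi.1 ht).ne').const_mul c)
    fun t (ht : 0 < t) => by simp [(hderiv t ht).deriv, ht.ne']
  refine ⟨C, fun t ht => ?_⟩
  have := hC ht
  simp only at this
  field_simp at this
  linarith

section DeterminingEquations

variable {T X : ℝ → ℝ → ℝ}

lemma exists_of_determining_equations
    (hT : DifferentiableOn ℝ (fun p : ℝ × ℝ => T p.1 p.2) (Ioi 0 ×ˢ univ))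
    (hX : DifferentiableOn ℝ (fun p : ℝ × ℝ => X p.1 p.2) (Ioi 0 ×ˢ univ))
    (h : ∀ t > (0 : ℝ), ∀ x : ℝ, deriv (fun u => X u x) t = 0 ∧ deriv (fun y => T t y) x = 0 ∧
      T t x + 2 * t * deriv (fun y => X t y) x - t * deriv (fun u => T u x) t = 0) :
    ∃ C₁ C₂ C₃ : ℝ, ∀ t > (0 : ℝ), ∀ x : ℝ,
      T t x = (2 * C₁ * log t + C₃) * t ∧ X t x = C₁ * x + C₂ := by
  have hopen : IsOpen (Ioi (0 : ℝ) ×ˢ (univ : Set ℝ)) := isOpen_Ioi.prod isOpen_univ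
  have hTat : ∀ t > (0 : ℝ), ∀ x, DifferentiableAt ℝ (fun p : ℝ × ℝ => T p.1 p.2) (t, x) :=
    fun t ht x => hT.differentiableAt (hopen.mem_nhds ⟨ht, trivial⟩)
  have hXat : ∀ t > (0 : ℝ), ∀ x, DifferentiableAt ℝ (fun p : ℝ × ℝ => X p.1 p.2) (t, x) :=
    fun t ht x => hX.differentiableAt (hopen.mem_nhds ⟨ht, trivial⟩)
  set f : ℝ → ℝ := fun t => T t 0
  set g : ℝ → ℝ := fun x => X 1 x
  have hTf : ∀ t > (0 : ℝ), ∀ x, T t x = f t := fun t ht x =>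
    is_const_of_deriv_eq_zero (fun y => (hTat t ht y).slice_snd) (fun y => (h t ht y).2.1) x 0
  have hXg : ∀ t > (0 : ℝ), ∀ x, X t x = g x := fun t ht x =>
    isOpen_Ioi.is_const_of_deriv_eq_zero isPreconnected_Ioi
      (fun u hu => (hXat u hu x).slice_fst.differentiableWithinAt) (fun u hu => (h u hu x).1)
      ht (mem_Ioi.2 one_pos)
  have hfg : ∀ t > (0 : ℝ), ∀ x, f t + 2 * t * deriv g x - t * deriv f t = 0 := by
    intro t ht x
    have hnhds : ∀ᶠ u in nhds t, 0 < u := Ioi_mem_nhds ht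
    have hTt : deriv (fun u => T u x) t = deriv f t :=
      Filter.EventuallyEq.deriv_eq (hnhds.mono fun u hu => hTf u hu x)
    have hXx : (fun y => X t y) = g := funext (hXg t ht)
    simpa [hTt, hXx, hTf t ht x] using (h t ht x).2.2
  set C₁ := deriv g 0
  have hg' : ∀ x, deriv g x = C₁ := fun x => by linarith [hfg 1 one_pos x, hfg 1 one_pos 0]
  obtain ⟨C₂, hC₂⟩ := exists_eq_mul_add_of_deriv_eq (fun x => (hXat 1 one_pos x).slice_snd) hg'
  obtain ⟨C₃, hC₃⟩ := exists_eq_mul_log_add_mul (c := 2 * C₁)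
    (fun t ht => (hTat t ht 0).slice_fst.differentiableWithinAt)
    fun t ht => by linarith [hfg t ht 0, hg' 0]
  exact ⟨C₁, C₂, C₃, fun t ht x => ⟨(hTf t ht x).trans (hC₃ t ht), (hXg t ht x).trans (hC₂ x)⟩⟩

lemma determining_equations_of_eq {C₁ C₂ C₃ : ℝ}
    (h : ∀ t > (0 : ℝ), ∀ x : ℝ, T t x = (2 * C₁ * log t + C₃) * t ∧ X t x = C₁ * x + C₂)
    {t : ℝ} (ht : 0 < t) (x : ℝ) :
    deriv (fun u => X u x) t = 0 ∧ deriv (fun y => T t y) x = 0 ∧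
      T t x + 2 * t * deriv (fun y => X t y) x - t * deriv (fun u => T u x) t = 0 := by
  have hnhds : ∀ᶠ u in nhds t, 0 < u := Ioi_mem_nhds ht
  have hXt : deriv (fun u => X u x) t = 0 := by
    rw [Filter.EventuallyEq.deriv_eq (f := fun _ => C₁ * x + C₂)
      (hnhds.mono fun u hu => (h u hu x).2), deriv_const]
  have hTx : deriv (fun y => T t y) x = 0 := by
    rw [show (fun y => T t y) = fun _ => (2 * C₁ * log t + C₃) * t from
      funext fun y => (h t ht y).1, deriv_const]
  have hXx : deriv (fun y => X t y) x = C₁ := by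
    rw [show (fun y => X t y) = fun y => C₁ * y + C₂ from funext fun y => (h t ht y).2]
    simp
  have hTt : HasDerivAt (fun u => (2 * C₁ * log u + C₃) * u)
      ((2 * C₁ * t⁻¹) * t + (2 * C₁ * log t + C₃) * 1) t :=
    (((hasDerivAt_log ht.ne').const_mul (2 * C₁)).add_const C₃).mul (hasDerivAt_id' t)
  refine ⟨hXt, hTx, ?_⟩
  rw [Filter.EventuallyEq.deriv_eq (hnhds.mono fun u hu => (h u hu x).1), hTt.deriv, hXx,
    (h t ht x).1]
  field_simp
  ring

end DeterminingEquations

/-- Example 1: the variational symmetries of the Lagrangian `L(t,x,v) = t·v²`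
are exactly `T(t,x) = (2C₁·ln t + C₃)·t`, `X(t,x) = C₁·x + C₂`. -/
theorem stmt_9 (T X : ℝ → ℝ → ℝ)
    (hT : ContDiffOn ℝ 1 (fun p : ℝ × ℝ => T p.1 p.2) (Set.Ioi 0 ×ˢ Set.univ))
    (hX : ContDiffOn ℝ 1 (fun p : ℝ × ℝ => X p.1 p.2) (Set.Ioi 0 ×ˢ Set.univ)) :
    (∀ t > (0:ℝ), ∀ x v : ℝ,
        v ^ 2 * T t x
        + 2 * t * v * (deriv (fun u => X u x) t + deriv (fun y => X t y) x * v
            - v * (deriv (fun u => T u x) t + deriv (fun y => T t y) x * v))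
        + t * v ^ 2 * (deriv (fun u => T u x) t + deriv (fun y => T t y) x * v) = 0)
    ↔ (∃ C₁ C₂ C₃ : ℝ, ∀ t > (0:ℝ), ∀ x : ℝ,
        T t x = (2 * C₁ * Real.log t + C₃) * t ∧ X t x = C₁ * x + C₂) := by
  refine ⟨fun h => exists_of_determining_equations (hT.differentiableOn one_ne_zero)
    (hX.differentiableOn one_ne_zero) fun t ht x => (symmetry_identity_iff ht.ne').1 (h t ht x), ?_⟩
  rintro ⟨C₁, C₂, C₃, hC⟩ t ht x
  exact (symmetry_identity_iff ht.ne').2 (determining_equations_of_eq hC ht x)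
end

section
/- Let x₁, x₂ : ℝ → ℝ with x₁ twice differentiable and x₂ four times differentiable, satisfying x₁''(t) = 0 and x₂''''(t) = 0 for all t ∈ ℝ (the Euler–Lagrange equations of the Lagrangian L = (x₁')² + (x₂'')²). Then for all real constants C₁, C₂, C₃, C₄, C₅, the function t ↦ 2·((1/2)·C₁·x₁(t) + C₅)·x₁'(t) − 2·((3/2)·C₁·x₂(t) + C₃·t + C₄)·x₂'''(t) + 2·(C₃ + (1/2)·C₁·x₂'(t))·x₂''(t) + (−(x₁'(t))² − (x₂''(t))² + 2·x₂'(t)·x₂'''(t))·(C₁·t + C₂) is constant on ℝ. -/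
/-!
Noether's identity: for arbitrary smooth `x₁, x₂`, the derivative of the current attached to the
symmetry `T = C₁ t + C₂`, `X₁ = ½ C₁ x₁ + C₅`, `X₂ = (3/2) C₁ x₂ + C₃ t + C₄` equals
`2 (X₁ - T x₁') x₁'' - 2 (X₂ - T x₂') x₂''''`, a combination of the Euler–Lagrange expressions.
Along solutions it therefore has zero derivative on all of `ℝ`, hence is constant.
-/

theorem hasDerivAt_iteratedDeriv_succ {𝕜 F : Type*} [NontriviallyNormedField 𝕜]
    [NormedAddCommGroup F] [NormedSpace 𝕜 F] {f : 𝕜 → F} {k : ℕ} {t : 𝕜}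
    (h : DifferentiableAt 𝕜 (iteratedDeriv k f) t) :
    HasDerivAt (iteratedDeriv k f) (iteratedDeriv (k + 1) f t) t := by
  rw [iteratedDeriv_succ]
  exact h.hasDerivAt

noncomputable def noetherCurrent (C₁ C₂ C₃ C₄ C₅ : ℝ) (x₁ x₂ : ℝ → ℝ) (t : ℝ) : ℝ :=
  2 * ((1/2) * C₁ * x₁ t + C₅) * deriv x₁ t
    - 2 * ((3/2) * C₁ * x₂ t + C₃ * t + C₄) * iteratedDeriv 3 x₂ t
    + 2 * (C₃ + (1/2) * C₁ * deriv x₂ t) * iteratedDeriv 2 x₂ t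
    + (-(deriv x₁ t) ^ 2 - (iteratedDeriv 2 x₂ t) ^ 2
        + 2 * deriv x₂ t * iteratedDeriv 3 x₂ t) * (C₁ * t + C₂)

theorem hasDerivAt_noetherCurrent (C₁ C₂ C₃ C₄ C₅ : ℝ) {x₁ x₂ : ℝ → ℝ} {t : ℝ}
    (hx₁ : DifferentiableAt ℝ x₁ t) (hx₁' : DifferentiableAt ℝ (deriv x₁) t)
    (hx₂ : ∀ k < 4, DifferentiableAt ℝ (iteratedDeriv k x₂) t) :
    HasDerivAt (noetherCurrent C₁ C₂ C₃ C₄ C₅ x₁ x₂)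
      (2 * ((1/2) * C₁ * x₁ t + C₅ - (C₁ * t + C₂) * deriv x₁ t) * deriv (deriv x₁) t
        - 2 * ((3/2) * C₁ * x₂ t + C₃ * t + C₄ - (C₁ * t + C₂) * deriv x₂ t)
          * iteratedDeriv 4 x₂ t) t := by
  have ha₀ := hx₁.hasDerivAt
  have ha₁ := hx₁'.hasDerivAt
  have hb₀ := hasDerivAt_iteratedDeriv_succ (hx₂ 0 (by norm_num))
  have hb₁ := hasDerivAt_iteratedDeriv_succ (hx₂ 1 (by norm_num))
  have hb₂ := hasDerivAt_iteratedDeriv_succ (hx₂ 2 (by norm_num))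
  have hb₃ := hasDerivAt_iteratedDeriv_succ (hx₂ 3 (by norm_num))
  simp only [iteratedDeriv_zero, iteratedDeriv_one, zero_add, Nat.reduceAdd] at hb₀ hb₁ hb₂ hb₃
  have hT := (hasDerivAt_id t).const_mul C₁ |>.add_const C₂
  have hX₁ := ha₀.const_mul ((1/2) * C₁) |>.add_const C₅
  have hX₂ := (hb₀.const_mul ((3/2) * C₁)).add ((hasDerivAt_id t).const_mul C₃) |>.add_const C₄
  have hY := (hb₁.const_mul ((1/2) * C₁)).const_add C₃
  have hL := (((ha₁.pow 2).neg.sub (hb₂.pow 2)).add ((hb₁.const_mul 2).mul hb₃)).mul hT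
  refine ((((hX₁.const_mul 2).mul ha₁).sub ((hX₂.const_mul 2).mul hb₃)).add
    ((hY.const_mul 2).mul hb₂) |>.add hL).congr_deriv ?_
  simp only [id, Pi.add_apply, Pi.sub_apply, Pi.mul_apply, Pi.neg_apply, Pi.pow_apply]
  ring

/-- Conservation law for the second-order Lagrangian `L = (x₁')² + (x₂'')²`
(Example 3), along solutions of `x₁'' = 0`, `x₂'''' = 0`. -/
theorem stmt_12 (x₁ x₂ : ℝ → ℝ)
    (hx₁ : Differentiable ℝ x₁) (hx₁' : Differentiable ℝ (deriv x₁))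
    (hx₂ : ∀ k < 4, Differentiable ℝ (iteratedDeriv k x₂))
    (hode₁ : ∀ t : ℝ, deriv (deriv x₁) t = 0)
    (hode₂ : ∀ t : ℝ, iteratedDeriv 4 x₂ t = 0) :
    ∀ C₁ C₂ C₃ C₄ C₅ : ℝ, ∃ c : ℝ, ∀ t : ℝ,
      2 * ((1/2) * C₁ * x₁ t + C₅) * deriv x₁ t
        - 2 * ((3/2) * C₁ * x₂ t + C₃ * t + C₄) * iteratedDeriv 3 x₂ t
        + 2 * (C₃ + (1/2) * C₁ * deriv x₂ t) * iteratedDeriv 2 x₂ t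
        + (-(deriv x₁ t) ^ 2 - (iteratedDeriv 2 x₂ t) ^ 2
            + 2 * deriv x₂ t * iteratedDeriv 3 x₂ t) * (C₁ * t + C₂) = c := by
  intro C₁ C₂ C₃ C₄ C₅
  have hconserved : ∀ t, HasDerivAt (noetherCurrent C₁ C₂ C₃ C₄ C₅ x₁ x₂) 0 t := fun t => by
    simpa [hode₁ t, hode₂ t] using
      hasDerivAt_noetherCurrent C₁ C₂ C₃ C₄ C₅ (hx₁ t) (hx₁' t) (fun k hk => hx₂ k hk t)
  exact ⟨noetherCurrent C₁ C₂ C₃ C₄ C₅ x₁ x₂ 0, fun t =>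
    is_const_of_deriv_eq_zero (fun s => (hconserved s).differentiableAt)
      (fun s => (hconserved s).deriv) t 0⟩
end

section
/- Consider the Emden–Fowler Lagrangian L(t,x,v) = (t²/2)·(v² − x⁶/3). Let T, X : (0,∞) × ℝ → ℝ be continuously differentiable. Then T and X satisfy the variational-symmetry identity t·(v² − x⁶/3)·T(t,x) − t²·x⁵·X(t,x) + t²·v·(∂X/∂t(t,x) + ∂X/∂x(t,x)·v − v·(∂T/∂t(t,x) + ∂T/∂x(t,x)·v)) + (t²/2)·(v² − x⁶/3)·(∂T/∂t(t,x) + ∂T/∂x(t,x)·v) = 0 for all t > 0, x ∈ ℝ, v ∈ ℝ, if and only if there exists a constant C₁ such that T(t,x) = C₁·t and X(t,x) = −C₁·x/2 for all t > 0, x ∈ ℝ. -/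
/-!
The symmetry condition is a cubic polynomial in `v`, so its four coefficients vanish. The `v³`
and `v` coefficients give `∂T/∂x = 0` and `∂X/∂t = 0`, so `T = τ(t)` and `X = ξ(x)`. The `v²`
coefficient `τ + t ξ' - t τ'/2 = 0` makes `ξ'` a constant `k`, so `ξ` is affine; the `v⁰`
coefficient `x⁵ (x τ/3 + t ξ + t x τ'/6) = 0`, read at `x = ±1`, kills the constant term of `ξ`
and, combined with the `v²` equation, gives `τ = -2 k t`.
-/

open Set

theorem cubic_coeffs_eq_zero {K : Type*} [Field K] [CharZero K] {a b c d : K}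
    (h : ∀ v : K, a * v ^ 3 + b * v ^ 2 + c * v + d = 0) :
    a = 0 ∧ b = 0 ∧ c = 0 ∧ d = 0 := by
  have h0 := h 0
  have h1 := h 1
  have hm1 := h (-1)
  have h2 := h 2
  refine ⟨?_, ?_, ?_, ?_⟩
  · linear_combination (1 / 6 : K) * h2 - (1 / 2 : K) * h1 - (1 / 6 : K) * hm1 + (1 / 2 : K) * h0
  · linear_combination (1 / 2 : K) * h1 + (1 / 2 : K) * hm1 - h0
  · linear_combination -(1 / 6 : K) * h2 + h1 - (1 / 3 : K) * hm1 - (1 / 2 : K) * h0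
  · linear_combination h0

theorem eq_mul_add_of_deriv_eq_const {f : ℝ → ℝ} {k : ℝ} (hf : Differentiable ℝ f)
    (hf' : ∀ x, deriv f x = k) (x : ℝ) : f x = k * x + f 0 := by
  have hg : Differentiable ℝ (fun y => f y - k * y) := hf.sub (differentiable_id.const_mul k)
  have hg' : ∀ y, deriv (fun y => f y - k * y) y = 0 := fun y => by
    simpa [hf' y] using ((hf y).hasDerivAt.fun_sub ((hasDerivAt_id y).const_mul k)).deriv
  have := is_const_of_deriv_eq_zero hg hg' x 0
  linarith

section HalfPlane

variable {F : ℝ → ℝ → ℝ}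

theorem differentiableAt_of_contDiffOn_halfPlane
    (hF : ContDiffOn ℝ 1 (fun p : ℝ × ℝ => F p.1 p.2) (Ioi 0 ×ˢ univ)) {t x : ℝ} (ht : 0 < t) :
    DifferentiableAt ℝ (fun p : ℝ × ℝ => F p.1 p.2) (t, x) :=
  (hF.differentiableOn one_ne_zero).differentiableAt
    ((isOpen_Ioi.prod isOpen_univ).mem_nhds ⟨ht, trivial⟩)

theorem differentiableAt_snd_of_contDiffOn_halfPlane
    (hF : ContDiffOn ℝ 1 (fun p : ℝ × ℝ => F p.1 p.2) (Ioi 0 ×ˢ univ)) {t x : ℝ} (ht : 0 < t) :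
    DifferentiableAt ℝ (fun y => F t y) x :=
  (differentiableAt_of_contDiffOn_halfPlane hF ht).comp x
    ((differentiableAt_const t).prodMk differentiableAt_id)

theorem differentiableAt_fst_of_contDiffOn_halfPlane
    (hF : ContDiffOn ℝ 1 (fun p : ℝ × ℝ => F p.1 p.2) (Ioi 0 ×ˢ univ)) {t x : ℝ} (ht : 0 < t) :
    DifferentiableAt ℝ (fun u => F u x) t :=
  (differentiableAt_of_contDiffOn_halfPlane hF ht).comp (f := fun u => (u, x)) t
    (differentiableAt_id.prodMk (differentiableAt_const x))

theorem eq_of_deriv_snd_eq_zero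
    (hF : ContDiffOn ℝ 1 (fun p : ℝ × ℝ => F p.1 p.2) (Ioi 0 ×ˢ univ)) {t : ℝ} (ht : 0 < t)
    (hF' : ∀ y, deriv (fun y => F t y) y = 0) (x y : ℝ) : F t x = F t y :=
  is_const_of_deriv_eq_zero (fun _ => differentiableAt_snd_of_contDiffOn_halfPlane hF ht) hF' x y

theorem eq_of_deriv_fst_eq_zero
    (hF : ContDiffOn ℝ 1 (fun p : ℝ × ℝ => F p.1 p.2) (Ioi 0 ×ˢ univ)) {x : ℝ}
    (hF' : ∀ u > (0 : ℝ), deriv (fun u => F u x) u = 0) {t s : ℝ} (ht : 0 < t) (hs : 0 < s) :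
    F t x = F s x :=
  isOpen_Ioi.is_const_of_deriv_eq_zero isPreconnected_Ioi
    (fun _ hu => (differentiableAt_fst_of_contDiffOn_halfPlane hF hu).differentiableWithinAt)
    hF' ht hs

end HalfPlane

def EmdenFowlerDetermining (T X : ℝ → ℝ → ℝ) (t x : ℝ) : Prop :=
  deriv (fun y => T t y) x = 0 ∧ deriv (fun u => X u x) t = 0
    ∧ T t x + t * deriv (fun y => X t y) x - t * deriv (fun u => T u x) t / 2 = 0
    ∧ x ^ 5 * (x * T t x / 3 + t * X t x + t * x * deriv (fun u => T u x) t / 6) = 0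

/-- Here `T₀ = T(t,x)`, `X₀ = X(t,x)`, and `Tt, Tx, Xt, Xx` are the partial derivatives there. -/
theorem emdenFowler_symmetry_iff {t x T₀ X₀ Tt Tx Xt Xx : ℝ} (ht : t ≠ 0) :
    (∀ v : ℝ, t * (v ^ 2 - x ^ 6 / 3) * T₀ - t ^ 2 * x ^ 5 * X₀
        + t ^ 2 * v * (Xt + Xx * v - v * (Tt + Tx * v))
        + (t ^ 2 / 2) * (v ^ 2 - x ^ 6 / 3) * (Tt + Tx * v) = 0)
    ↔ Tx = 0 ∧ Xt = 0 ∧ T₀ + t * Xx - t * Tt / 2 = 0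
        ∧ x ^ 5 * (x * T₀ / 3 + t * X₀ + t * x * Tt / 6) = 0 := by
  have ht2 : t ^ 2 ≠ 0 := pow_ne_zero 2 ht
  constructor
  · intro h
    obtain ⟨h3, h2, h1, h0⟩ := cubic_coeffs_eq_zero (a := -(t ^ 2 / 2) * Tx)
      (b := t * (T₀ + t * Xx - t * Tt / 2)) (c := t ^ 2 * (Xt - x ^ 6 / 6 * Tx))
      (d := -t * (x ^ 5 * (x * T₀ / 3 + t * X₀ + t * x * Tt / 6)))
      fun v => by linear_combination h v
    have hTx : Tx = 0 := by simpa [ht2] using h3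
    refine ⟨hTx, ?_, ?_, ?_⟩
    · simpa [ht2, hTx] using h1
    · simpa [ht] using h2
    · simpa [ht] using h0
  · rintro ⟨hTx, hXt, h2, h0⟩ v
    rw [hTx, hXt]
    linear_combination (t * v ^ 2) * h2 - t * h0

/-- The determining equations for `T = τ(t)`, `X = ξ(x)`, with `τ'` standing for `dτ/dt`. -/
theorem exists_linear_of_separated_determining {τ τ' ξ : ℝ → ℝ} (hξ : Differentiable ℝ ξ)
    (h₂ : ∀ t > (0 : ℝ), ∀ x, τ t + t * deriv ξ x - t * τ' t / 2 = 0)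
    (h₀ : ∀ t > (0 : ℝ), ∀ x, x ^ 5 * (x * τ t / 3 + t * ξ x + t * x * τ' t / 6) = 0) :
    ∃ C : ℝ, (∀ t > (0 : ℝ), τ t = C * t) ∧ ∀ x, ξ x = -C * x / 2 := by
  set k := deriv ξ 0
  have hξ' : ∀ x, deriv ξ x = k := fun x => by linarith [h₂ 1 one_pos x, h₂ 1 one_pos 0]
  have hξ_affine := eq_mul_add_of_deriv_eq_const hξ hξ'
  have hξ0 : ξ 0 = 0 := by
    have e₁ := h₀ 1 one_pos 1
    have e₂ := h₀ 1 one_pos (-1)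
    rw [hξ_affine] at e₁ e₂
    linarith
  refine ⟨-2 * k, fun t ht => ?_, fun x => by rw [hξ_affine, hξ0]; ring⟩
  have e₀ := h₀ t ht 1
  rw [hξ_affine, hξ0] at e₀
  linear_combination (3 / 2 : ℝ) * e₀ + (1 / 2 : ℝ) * h₂ t ht 0

theorem exists_of_emdenFowlerDetermining {T X : ℝ → ℝ → ℝ}
    (hT : ContDiffOn ℝ 1 (fun p : ℝ × ℝ => T p.1 p.2) (Ioi 0 ×ˢ univ))
    (hX : ContDiffOn ℝ 1 (fun p : ℝ × ℝ => X p.1 p.2) (Ioi 0 ×ˢ univ))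
    (hdet : ∀ t > (0 : ℝ), ∀ x, EmdenFowlerDetermining T X t x) :
    ∃ C₁ : ℝ, ∀ t > (0 : ℝ), ∀ x, T t x = C₁ * t ∧ X t x = -C₁ * x / 2 := by
  set τ := fun t => T t 0
  set ξ := fun x => X 1 x
  have hTτ : ∀ t > (0 : ℝ), ∀ x, T t x = τ t := fun t ht x =>
    eq_of_deriv_snd_eq_zero hT ht (fun y => (hdet t ht y).1) x 0
  have hXξ : ∀ t > (0 : ℝ), ∀ x, X t x = ξ x := fun t ht x =>
    eq_of_deriv_fst_eq_zero hX (fun u hu => (hdet u hu x).2.1) ht one_pos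
  have hTt : ∀ t > (0 : ℝ), ∀ x, deriv (fun u => T u x) t = deriv τ t := fun t ht x =>
    (EqOn.eventuallyEq_of_mem (fun u hu => hTτ u hu x) (Ioi_mem_nhds ht)).deriv_eq
  have hXx : ∀ t > (0 : ℝ), ∀ x, deriv (fun y => X t y) x = deriv ξ x := fun t ht x => by
    rw [funext (hXξ t ht)]
  have hξ : Differentiable ℝ ξ := fun _ => differentiableAt_snd_of_contDiffOn_halfPlane hX one_pos
  obtain ⟨C, hτ, hξC⟩ := exists_linear_of_separated_determining (τ' := deriv τ) hξ
    (fun t ht x => by simpa only [hTτ t ht, hTt t ht, hXx t ht] using (hdet t ht x).2.2.1)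
    (fun t ht x => by simpa only [hTτ t ht, hXξ t ht, hTt t ht] using (hdet t ht x).2.2.2)
  exact ⟨C, fun t ht x => ⟨(hTτ t ht x).trans (hτ t ht), (hXξ t ht x).trans (hξC x)⟩⟩

theorem emdenFowlerDetermining_of_eq {T X : ℝ → ℝ → ℝ} {C₁ : ℝ}
    (hC : ∀ t > (0 : ℝ), ∀ x, T t x = C₁ * t ∧ X t x = -C₁ * x / 2) {t : ℝ} (ht : 0 < t)
    (x : ℝ) : EmdenFowlerDetermining T X t x := by
  have hTt : deriv (fun u => T u x) t = C₁ := by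
    rw [(EqOn.eventuallyEq_of_mem (fun u hu => (hC u hu x).1) (Ioi_mem_nhds ht)).deriv_eq]
    simp
  have hXt : deriv (fun u => X u x) t = 0 := by
    rw [(EqOn.eventuallyEq_of_mem (fun u hu => (hC u hu x).2) (Ioi_mem_nhds ht)).deriv_eq,
      deriv_const]
  have hTx : deriv (fun y => T t y) x = 0 := by
    rw [funext fun y => (hC t ht y).1, deriv_const]
  have hXx : deriv (fun y => X t y) x = -C₁ / 2 := by
    rw [funext fun y => (hC t ht y).2]
    simp
  refine ⟨hTx, hXt, ?_, ?_⟩ <;> simp only [hTt, hXx, (hC t ht x).1, (hC t ht x).2] <;> ring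

/-- Example 4: the variational symmetries of the Emden–Fowler Lagrangian
`L(t,x,v) = (t²/2)(v² − x⁶/3)` are exactly `T(t,x) = C₁·t`, `X(t,x) = −C₁·x/2`. -/
theorem stmt_13 (T X : ℝ → ℝ → ℝ)
    (hT : ContDiffOn ℝ 1 (fun p : ℝ × ℝ => T p.1 p.2) (Set.Ioi 0 ×ˢ Set.univ))
    (hX : ContDiffOn ℝ 1 (fun p : ℝ × ℝ => X p.1 p.2) (Set.Ioi 0 ×ˢ Set.univ)) :
    (∀ t > (0:ℝ), ∀ x v : ℝ,
        t * (v ^ 2 - x ^ 6 / 3) * T t x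
        - t ^ 2 * x ^ 5 * X t x
        + t ^ 2 * v * (deriv (fun u => X u x) t + deriv (fun y => X t y) x * v
            - v * (deriv (fun u => T u x) t + deriv (fun y => T t y) x * v))
        + (t ^ 2 / 2) * (v ^ 2 - x ^ 6 / 3)
            * (deriv (fun u => T u x) t + deriv (fun y => T t y) x * v) = 0)
    ↔ (∃ C₁ : ℝ, ∀ t > (0:ℝ), ∀ x : ℝ,
        T t x = C₁ * t ∧ X t x = -C₁ * x / 2) := by
  constructor
  · exact fun h => exists_of_emdenFowlerDetermining hT hX fun t ht x =>
      (emdenFowler_symmetry_iff ht.ne').mp (h t ht x)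
  · rintro ⟨C₁, hC⟩ t ht x
    exact (emdenFowler_symmetry_iff ht.ne').mpr (emdenFowlerDetermining_of_eq hC ht x)
end

section
/- Let x : (0,∞) → ℝ be twice differentiable and satisfy the Emden–Fowler equation 2t·x'(t) + t²·x''(t) + t²·x(t)⁵ = 0 for all t > 0 (the Euler–Lagrange equation of the Lagrangian L(t,x,v) = (t²/2)(v² − x⁶/3)). Then the function t ↦ t²·(3·x(t)·x'(t) + 3·t·(x'(t))² + t·x(t)⁶) is constant on (0,∞). -/
/-!
The quantity is the Noether charge of the Emden–Fowler Lagrangian for the scaling symmetry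
generated by `T = -6t`, `X = 3x`. Along any curve `x` with velocity `v = x'`, its derivative
is `(3x + 6t x')` times the Euler–Lagrange expression `2t x' + t² x'' + t² x⁵`, so it vanishes
along solutions, and a function with zero derivative on the interval `(0, ∞)` is constant.
-/

def emdenFowlerCharge (x v : ℝ → ℝ) (t : ℝ) : ℝ :=
  t ^ 2 * (3 * x t * v t + 3 * t * v t ^ 2 + t * x t ^ 6)

theorem hasDerivAt_emdenFowlerCharge {x v : ℝ → ℝ} {t a : ℝ}
    (hx : HasDerivAt x (v t) t) (hv : HasDerivAt v a t) :
    HasDerivAt (emdenFowlerCharge x v)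
      ((3 * x t + 6 * t * v t) * (2 * t * v t + t ^ 2 * a + t ^ 2 * x t ^ 5)) t := by
  have hid := hasDerivAt_id t
  have h := (hasDerivAt_pow 2 t).mul
    ((((hx.const_mul 3).mul hv).add ((hid.const_mul 3).mul (hv.pow 2))).add (hid.mul (hx.pow 6)))
  refine h.congr_deriv ?_
  simp only [Pi.add_apply, Pi.mul_apply, Pi.pow_apply, id_eq]
  push_cast
  ring

/-- Conservation law for the Emden–Fowler equation (Example 4):
along solutions of `2t·x' + t²·x'' + t²·x⁵ = 0` on `(0,∞)`, the quantity
`t²·(3·x·x' + 3·t·(x')² + t·x⁶)` is constant. -/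
theorem stmt_14 (x : ℝ → ℝ)
    (hx : ∀ t ∈ Set.Ioi (0:ℝ), DifferentiableAt ℝ x t)
    (hx' : ∀ t ∈ Set.Ioi (0:ℝ), DifferentiableAt ℝ (deriv x) t)
    (hode : ∀ t ∈ Set.Ioi (0:ℝ),
      2 * t * deriv x t + t ^ 2 * deriv (deriv x) t + t ^ 2 * x t ^ 5 = 0) :
    ∃ c : ℝ, ∀ t ∈ Set.Ioi (0:ℝ),
      t ^ 2 * (3 * x t * deriv x t + 3 * t * (deriv x t) ^ 2 + t * x t ^ 6) = c := by
  have hcharge : ∀ t ∈ Set.Ioi (0:ℝ), HasDerivAt (emdenFowlerCharge x (deriv x)) 0 t := by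
    intro t ht
    simpa [hode t ht] using
      hasDerivAt_emdenFowlerCharge (hx t ht).hasDerivAt (hx' t ht).hasDerivAt
  exact isOpen_Ioi.exists_is_const_of_deriv_eq_zero isPreconnected_Ioi
    (fun t ht => (hcharge t ht).differentiableAt.differentiableWithinAt)
    (fun t ht => (hcharge t ht).deriv)
end

section
/- Consider the Thomas–Fermi Lagrangian L(t,x,v) = v²/2 + (2/5)·x^{5/2}/√t, defined for t > 0 and x > 0. Let T, X : (0,∞) × (0,∞) → ℝ be continuously differentiable and satisfy the variational-symmetry identity (−(1/5)·x^{5/2}·t^{−3/2})·T(t,x) + (x^{3/2}/√t)·X(t,x) + v·(∂X/∂t(t,x) + ∂X/∂x(t,x)·v − v·(∂T/∂t(t,x) + ∂T/∂x(t,x)·v)) + (v²/2 + (2/5)·x^{5/2}/√t)·(∂T/∂t(t,x) + ∂T/∂x(t,x)·v) = 0 for all t > 0, x > 0 and all v ∈ ℝ. Then T(t,x) = 0 and X(t,x) = 0 for all t > 0, x > 0; that is, the Thomas–Fermi variational problem admits no nontrivial variational symmetry. -/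
/-!
Expanding the symmetry condition in powers of `v` gives the determining system
`∂ₓT = 0`, `∂ₜX = 0`, `∂ₓX = ∂ₜT / 2` and a zeroth-order equation. The first three separate
the variables, forcing `T = a + k t` and `X = b + k x / 2`. After division by `x^{3/2}/√t` the
zeroth-order equation becomes the polynomial identity `-(a/5) x + b t + (7/10) k x t = 0` on the
open quadrant, so `a = b = k = 0`.
-/

open Set

lemma cubic_coeffs_eq_zero_s15 {c₀ c₁ c₂ c₃ : ℝ}
    (h : ∀ v : ℝ, c₀ + c₁ * v + c₂ * v ^ 2 + c₃ * v ^ 3 = 0) :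
    c₀ = 0 ∧ c₁ = 0 ∧ c₂ = 0 ∧ c₃ = 0 := by
  have h₀ := h 0
  have h₁ := h 1
  have h₂ := h (-1)
  have h₃ := h 2
  norm_num at h₀ h₁ h₂ h₃
  refine ⟨?_, ?_, ?_, ?_⟩ <;> linarith

lemma symmetry_condition_coeffs {A B C τ ξ τt τx ξt ξx : ℝ}
    (h : ∀ v : ℝ, A * τ + B * ξ + v * (ξt + ξx * v - v * (τt + τx * v))
      + (v ^ 2 / 2 + C) * (τt + τx * v) = 0) :
    τx = 0 ∧ ξt = 0 ∧ ξx = 1 / 2 * τt ∧ A * τ + B * ξ + C * τt = 0 := by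
  obtain ⟨h₀, h₁, h₂, h₃⟩ := cubic_coeffs_eq_zero_s15 (c₀ := A * τ + B * ξ + C * τt)
    (c₁ := ξt + C * τx) (c₂ := ξx - τt / 2) (c₃ := -τx / 2) fun v => by linear_combination h v
  have hτx : τx = 0 := by linarith
  exact ⟨hτx, by simpa [hτx] using h₁, by linarith, h₀⟩

lemma eq_add_mul_sub_of_deriv_eq {f : ℝ → ℝ} {s : Set ℝ} {c a b : ℝ} (hs : IsOpen s)
    (hs' : IsPreconnected s) (hd : ∀ y ∈ s, DifferentiableAt ℝ f y)
    (hf' : ∀ y ∈ s, deriv f y = c) (ha : a ∈ s) (hb : b ∈ s) :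
    f b = f a + c * (b - a) := by
  have hg : ∀ y ∈ s, HasDerivAt (fun y => f y - c * y) 0 y := fun y hy => by
    have := (hd y hy).hasDerivAt.sub ((hasDerivAt_id' y).const_mul c)
    rwa [hf' y hy, mul_one, sub_self] at this
  have := hs.is_const_of_deriv_eq_zero hs'
    (fun y hy => (hg y hy).differentiableAt.differentiableWithinAt)
    (fun y hy => (hg y hy).deriv) hb ha
  linarith

section Slices

variable {F : ℝ → ℝ → ℝ} {s : Set (ℝ × ℝ)} {t x : ℝ}

lemma ContDiffOn.differentiableAt_slice_fst
    (hF : ContDiffOn ℝ 1 (fun p : ℝ × ℝ => F p.1 p.2) s) (hs : IsOpen s) (h : (t, x) ∈ s) :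
    DifferentiableAt ℝ (fun u => F u x) t := by
  exact ((hF.contDiffAt (hs.mem_nhds h)).differentiableAt one_ne_zero).comp t
    (differentiableAt_fun_id.prodMk (differentiableAt_const x) :
      DifferentiableAt ℝ (fun u => (u, x)) t)

lemma ContDiffOn.differentiableAt_slice_snd
    (hF : ContDiffOn ℝ 1 (fun p : ℝ × ℝ => F p.1 p.2) s) (hs : IsOpen s) (h : (t, x) ∈ s) :
    DifferentiableAt ℝ (fun y => F t y) x := by
  exact ((hF.contDiffAt (hs.mem_nhds h)).differentiableAt one_ne_zero).comp x
    ((differentiableAt_const t).prodMk differentiableAt_fun_id :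
      DifferentiableAt ℝ (fun y => (t, y)) x)

end Slices

lemma exists_affine_of_deriv_system {F G : ℝ → ℝ → ℝ} {c : ℝ} (hc : c ≠ 0)
    (hF : ContDiffOn ℝ 1 (fun p : ℝ × ℝ => F p.1 p.2) (Ioi 0 ×ˢ Ioi 0))
    (hG : ContDiffOn ℝ 1 (fun p : ℝ × ℝ => G p.1 p.2) (Ioi 0 ×ˢ Ioi 0))
    (hFx : ∀ t > (0:ℝ), ∀ x > (0:ℝ), deriv (fun y => F t y) x = 0)
    (hGt : ∀ t > (0:ℝ), ∀ x > (0:ℝ), deriv (fun u => G u x) t = 0)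
    (hGx : ∀ t > (0:ℝ), ∀ x > (0:ℝ), deriv (fun y => G t y) x = c * deriv (fun u => F u x) t) :
    ∃ a b k : ℝ, ∀ t > (0:ℝ), ∀ x > (0:ℝ),
      F t x = a + k * t ∧ G t x = b + c * k * x ∧ deriv (fun u => F u x) t = k := by
  have hopen : IsOpen (Ioi (0:ℝ) ×ˢ Ioi (0:ℝ)) := isOpen_Ioi.prod isOpen_Ioi
  have one_mem : (1:ℝ) ∈ Ioi 0 := mem_Ioi.mpr zero_lt_one
  have hF_sep : ∀ t > (0:ℝ), ∀ x > (0:ℝ), F t x = F t 1 := fun t ht x hx => by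
    simpa using eq_add_mul_sub_of_deriv_eq isOpen_Ioi isPreconnected_Ioi
      (fun y hy => hF.differentiableAt_slice_snd hopen ⟨ht, hy⟩) (hFx t ht) one_mem hx
  have hG_sep : ∀ t > (0:ℝ), ∀ x > (0:ℝ), G t x = G 1 x := fun t ht x hx => by
    simpa using eq_add_mul_sub_of_deriv_eq isOpen_Ioi isPreconnected_Ioi
      (fun u hu => hG.differentiableAt_slice_fst hopen ⟨hu, hx⟩) (hGt · · x hx) one_mem ht
  have hFt : ∀ t > (0:ℝ), ∀ x > (0:ℝ), deriv (fun u => F u x) t = deriv (fun u => F u 1) t :=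
    fun t ht x hx => Filter.EventuallyEq.deriv_eq <| by
      filter_upwards [isOpen_Ioi.mem_nhds ht] with u hu using hF_sep u hu x hx
  have hGx' : ∀ t > (0:ℝ), ∀ x > (0:ℝ), deriv (fun y => G t y) x = deriv (fun y => G 1 y) x :=
    fun t ht x hx => Filter.EventuallyEq.deriv_eq <| by
      filter_upwards [isOpen_Ioi.mem_nhds hx] with y hy using hG_sep t ht y hy
  -- `∂ₜF` depends only on `t` and `∂ₓG` only on `x`, and they are proportional: both are constant.
  set k := deriv (fun u => F u 1) 1
  have hFt_const : ∀ t > (0:ℝ), deriv (fun u => F u 1) t = k := fun t ht => by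
    refine mul_left_cancel₀ hc ?_
    rw [← hGx t ht 1 one_mem, hGx' t ht 1 one_mem, hGx 1 one_mem 1 one_mem]
  have hGx_const : ∀ x > (0:ℝ), deriv (fun y => G 1 y) x = c * k := fun x hx => by
    rw [hGx 1 one_mem x hx, hFt 1 one_mem x hx]
  refine ⟨F 1 1 - k, G 1 1 - c * k, k, fun t ht x hx => ⟨?_, ?_, ?_⟩⟩
  · rw [hF_sep t ht x hx, eq_add_mul_sub_of_deriv_eq isOpen_Ioi isPreconnected_Ioi
      (fun u hu => hF.differentiableAt_slice_fst hopen ⟨hu, one_mem⟩) hFt_const one_mem ht]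
    ring
  · rw [hG_sep t ht x hx, eq_add_mul_sub_of_deriv_eq isOpen_Ioi isPreconnected_Ioi
      (fun y hy => hG.differentiableAt_slice_snd hopen ⟨one_mem, hy⟩) hGx_const one_mem hx]
    ring
  · rw [hFt t ht x hx, hFt_const t ht]

lemma rpow_five_halves_eq {x : ℝ} (hx : 0 ≤ x) : x ^ ((5:ℝ) / 2) = x * x ^ ((3:ℝ) / 2) := by
  rw [show (5:ℝ) / 2 = 1 + 3 / 2 by norm_num, Real.rpow_add' hx (by norm_num), Real.rpow_one]

lemma rpow_neg_three_halves_eq {t : ℝ} (ht : 0 ≤ t) : t ^ (-(3:ℝ) / 2) = (t * √t)⁻¹ := by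
  rw [show -(3:ℝ) / 2 = -(1 + 1 / 2) by norm_num, Real.rpow_neg ht, Real.rpow_add' ht (by norm_num),
    Real.rpow_one, Real.sqrt_eq_rpow]

lemma thomasFermi_zeroth_order {t x τ ξ κ : ℝ} (ht : 0 < t) (hx : 0 < x)
    (h : (-(1/5) * x ^ ((5:ℝ)/2) * t ^ (-(3:ℝ)/2)) * τ + (x ^ ((3:ℝ)/2) / √t) * ξ
      + ((2/5) * x ^ ((5:ℝ)/2) / √t) * κ = 0) :
    -(1/5) * x * τ + t * ξ + (2/5) * x * t * κ = 0 := by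
  rw [rpow_five_halves_eq hx.le, rpow_neg_three_halves_eq ht.le] at h
  have hfac : x ^ ((3:ℝ)/2) / (t * √t) ≠ 0 := by positivity
  refine (mul_eq_zero.mp ?_).resolve_left hfac
  rw [← h]
  field_simp

/-- Example 5: the Thomas–Fermi Lagrangian `L(t,x,v) = v²/2 + (2/5)x^{5/2}/√t`
admits no nontrivial variational symmetry. -/
theorem stmt_15 (T X : ℝ → ℝ → ℝ)
    (hT : ContDiffOn ℝ 1 (fun p : ℝ × ℝ => T p.1 p.2) (Set.Ioi 0 ×ˢ Set.Ioi 0))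
    (hX : ContDiffOn ℝ 1 (fun p : ℝ × ℝ => X p.1 p.2) (Set.Ioi 0 ×ˢ Set.Ioi 0))
    (hsym : ∀ t > (0:ℝ), ∀ x > (0:ℝ), ∀ v : ℝ,
        (-(1/5) * x ^ ((5:ℝ)/2) * t ^ (-(3:ℝ)/2)) * T t x
        + (x ^ ((3:ℝ)/2) / Real.sqrt t) * X t x
        + v * (deriv (fun u => X u x) t + deriv (fun y => X t y) x * v
            - v * (deriv (fun u => T u x) t + deriv (fun y => T t y) x * v))
        + (v ^ 2 / 2 + (2/5) * x ^ ((5:ℝ)/2) / Real.sqrt t)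
            * (deriv (fun u => T u x) t + deriv (fun y => T t y) x * v) = 0) :
    ∀ t > (0:ℝ), ∀ x > (0:ℝ), T t x = 0 ∧ X t x = 0 := by
  have hcoeff := fun t (ht : t > 0) x (hx : x > 0) => symmetry_condition_coeffs (hsym t ht x hx)
  obtain ⟨a, b, k, hTX⟩ := exists_affine_of_deriv_system (c := 1 / 2) (by norm_num) hT hX
    (fun t ht x hx => (hcoeff t ht x hx).1) (fun t ht x hx => (hcoeff t ht x hx).2.1)
    (fun t ht x hx => (hcoeff t ht x hx).2.2.1)
  have hpoly : ∀ t > (0:ℝ), ∀ x > (0:ℝ), -(1/5) * a * x + b * t + (7/10) * k * x * t = 0 := by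
    intro t ht x hx
    obtain ⟨hTtx, hXtx, hTt⟩ := hTX t ht x hx
    have h := thomasFermi_zeroth_order ht hx (hcoeff t ht x hx).2.2.2
    rw [hTtx, hXtx, hTt] at h
    linear_combination h
  have h₁ := hpoly 1 one_pos 1 one_pos
  have h₂ := hpoly 2 two_pos 1 one_pos
  have h₃ := hpoly 1 one_pos 2 two_pos
  have ha : a = 0 := by linarith
  have hb : b = 0 := by linarith
  have hk : k = 0 := by linarith
  intro t ht x hx
  obtain ⟨hTtx, hXtx, -⟩ := hTX t ht x hx
  simp [hTtx, hXtx, ha, hb, hk]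
end

section
/- Fix real constants m > 0, k and a, and let x : ℝ → ℝ be twice differentiable and satisfy the equation of motion of the damped harmonic oscillator, m·x''(t) + a·x'(t) + k·x(t) = 0 for all t ∈ ℝ (the Euler–Lagrange equation of the Lagrangian L(t,x,v) = (1/2)·(m·v² − k·x²)·e^{a·t/m}). Then the function t ↦ e^{a·t/m}·(a·x(t)·x'(t) + m·(x'(t))² + k·x(t)²) is constant on ℝ. -/
open Real

/-- The Noether charge of the damped oscillator for the symmetry `T = 1`, `X = -a x / (2m)`. -/
noncomputable def dampedOscillatorCharge (m k a t x v : ℝ) : ℝ :=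
  exp (a * t / m) * (a * x * v + m * v ^ 2 + k * x ^ 2)

theorem hasDerivAt_dampedOscillatorCharge {m k a : ℝ} (hm : m ≠ 0) {x v : ℝ → ℝ}
    {t w : ℝ}
    (hx : HasDerivAt x (v t) t) (hv : HasDerivAt v w t) :
    HasDerivAt (fun s => dampedOscillatorCharge m k a s (x s) (v s))
      (exp (a * t / m) * (a * x t + 2 * m * v t) * (m * w + a * v t + k * x t) / m) t := by
  have hexp : HasDerivAt (fun s => exp (a * s / m)) (exp (a * t / m) * (a / m)) t := by
    have hlin : HasDerivAt (fun s : ℝ => a * s / m) (a / m) t := by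
      simpa using ((hasDerivAt_id t).const_mul a).div_const m
    exact hlin.exp
  have hquad : HasDerivAt (fun s => a * x s * v s + m * v s ^ 2 + k * x s ^ 2)
      (a * (v t * v t + x t * w) + m * (2 * v t * w) + k * (2 * x t * v t)) t := by
    refine ((((hx.const_mul a).mul hv).add ((hv.fun_pow 2).const_mul m)).add
      ((hx.fun_pow 2).const_mul k)).congr_deriv ?_
    push_cast
    ring
  refine (hexp.mul hquad).congr_deriv ?_
  field_simp
  ring

/-- First integral of the damped harmonic oscillator (Example 6):
along solutions of `m·x'' + a·x' + k·x = 0`, the quantity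
`e^{at/m}·(a·x·x' + m·(x')² + k·x²)` is constant. -/
theorem stmt_16 (m k a : ℝ) (hm : 0 < m) (x : ℝ → ℝ)
    (hx : Differentiable ℝ x) (hx' : Differentiable ℝ (deriv x))
    (hode : ∀ t : ℝ, m * deriv (deriv x) t + a * deriv x t + k * x t = 0) :
    ∃ c : ℝ, ∀ t : ℝ,
      Real.exp (a * t / m) *
        (a * x t * deriv x t + m * (deriv x t) ^ 2 + k * x t ^ 2) = c := by
  set F := fun t => dampedOscillatorCharge m k a t (x t) (deriv x t)
  have hF : ∀ t, HasDerivAt F 0 t := fun t => by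
    simpa [hode t] using hasDerivAt_dampedOscillatorCharge (k := k) (a := a) hm.ne'
      (hx t).hasDerivAt (hx' t).hasDerivAt
  exact ⟨F 0, fun t => is_const_of_deriv_eq_zero (fun s => (hF s).differentiableAt)
    (fun s => (hF s).deriv) t 0⟩
end
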